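/- arXiv:1805.00077 — 7 statements merged into one kernel-verified Lean document; each statement's English description precedes it below -/
import Mathlib

section
/- Let X be a separable complex Banach space, T a bounded linear operator on X, and D a dense subset of X. Suppose that for every x ∈ D there exists a sequence (u_k)_{k≥0} in X with u_0 = x such that: (a) the family (Tⁿ x)_{n≥0} is summable (the series ∑_{n≥0} Tⁿ x converges unconditionally), (b) the family (u_n)_{n≥0} is summable, and (c) Tⁿ u_k = u_{k−n} for all natural numbers k ≥ n. Then T is chaotic. -/
open Filter

/-- **Chaoticity Criterion.** Let `X` be a separable complex Banach space, `T` a bounded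
linear operator on `X`, and `D` a dense subset of `X`. Suppose that for every `x ∈ D`
there is a sequence `u` with `u 0 = x` such that `∑ Tⁿ x` and `∑ uₙ` converge
unconditionally (i.e. the families are summable) and `Tⁿ (u k) = u (k - n)` for `k ≥ n`.
Then `T` is chaotic: `T` is hypercyclic and has a dense set of periodic points. -/
theorem stmt0 {X : Type*} [NormedAddCommGroup X] [NormedSpace ℂ X] [CompleteSpace X]
    [TopologicalSpace.SeparableSpace X]
    (T : X →L[ℂ] X) (D : Set X) (hD : Dense D)
    (h : ∀ x ∈ D, ∃ u : ℕ → X, u 0 = x ∧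
      Summable (fun n : ℕ => (T ^ n) x) ∧ Summable u ∧
      ∀ n k : ℕ, n ≤ k → (T ^ n) (u k) = u (k - n)) :
    (∃ x : X, Dense (Set.range fun n : ℕ => (T ^ n) x)) ∧
      Dense {y : X | ∃ k : ℕ, 1 ≤ k ∧ (T ^ k) y = y} := by
  classical
  -- Topological transitivity
  have trans : ∀ U V : Set X, IsOpen U → IsOpen V → U.Nonempty → V.Nonempty →
      ∃ z : X, ∃ n : ℕ, z ∈ U ∧ (T ^ n) z ∈ V := by
    intro U V hU hV hUne hVne
    obtain ⟨x, hxU, hxD⟩ := hD.inter_open_nonempty U hU hUne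
    obtain ⟨y, hyV, hyD⟩ := hD.inter_open_nonempty V hV hVne
    obtain ⟨_, _, hxsum, _, _⟩ := h x hxD
    obtain ⟨v, hv0, _, hvsum, hvshift⟩ := h y hyD
    have h1 : Tendsto (fun n => x + v n) atTop (nhds x) := by
      simpa using tendsto_const_nhds.add hvsum.tendsto_atTop_zero
    have h2 : Tendsto (fun n => (T ^ n) x + y) atTop (nhds y) := by
      simpa using hxsum.tendsto_atTop_zero.add (tendsto_const_nhds (x := y))
    have e1 : ∀ᶠ n in atTop, x + v n ∈ U := h1 (hU.mem_nhds hxU)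
    have e2 : ∀ᶠ n in atTop, (T ^ n) x + y ∈ V := h2 (hV.mem_nhds hyV)
    obtain ⟨n, hn1, hn2⟩ := (e1.and e2).exists
    refine ⟨x + v n, n, hn1, ?_⟩
    have : (T ^ n) (x + v n) = (T ^ n) x + y := by
      rw [map_add, hvshift n n le_rfl, Nat.sub_self, hv0]
    rw [this]; exact hn2
  constructor
  · -- Hypercyclicity via Baire category
    obtain ⟨b, hbc, hbne, hb⟩ := TopologicalSpace.exists_countable_basis X
    set S : Set (Set X) := (fun B => ⋃ n : ℕ, (fun z => (T ^ n) z) ⁻¹' B) '' b with hS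
    have hSopen : ∀ s ∈ S, IsOpen s := by
      rintro _ ⟨B, hB, rfl⟩
      exact isOpen_iUnion fun n => (hb.isOpen hB).preimage (T ^ n).continuous
    have hSd : ∀ s ∈ S, Dense s := by
      rintro _ ⟨B, hB, rfl⟩
      rw [dense_iff_inter_open]
      intro U hU hUne
      have hBne : B.Nonempty := Set.nonempty_iff_ne_empty.2 fun hB0 => hbne (hB0 ▸ hB)
      obtain ⟨z, n, hzU, hzB⟩ := trans U B hU (hb.isOpen hB) hUne hBne
      exact ⟨z, hzU, Set.mem_iUnion.2 ⟨n, hzB⟩⟩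
    have hdense := dense_sInter_of_isOpen hSopen (hbc.image _) hSd
    obtain ⟨x0, hx0⟩ := hdense.nonempty
    refine ⟨x0, hb.dense_iff.2 ?_⟩
    intro o ho hone
    have : x0 ∈ ⋃ n : ℕ, (fun z => (T ^ n) z) ⁻¹' o := hx0 _ ⟨o, ho, rfl⟩
    obtain ⟨n, hn⟩ := Set.mem_iUnion.1 this
    exact ⟨(T ^ n) x0, hn, ⟨n, rfl⟩⟩
  · -- Dense periodic points
    rw [Metric.dense_iff]
    intro z r hr
    have hr2 : (0 : ℝ) < r / 2 := by linarith
    obtain ⟨x, hxball, hxD⟩ := hD.inter_open_nonempty (Metric.ball z (r / 2))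
      Metric.isOpen_ball ⟨z, Metric.mem_ball_self hr2⟩
    obtain ⟨u, hu0, hxsum, husum, hushift⟩ := h x hxD
    set ε : ℝ := r / 2 with hε
    obtain ⟨s₁, hs₁⟩ := summable_iff_vanishing_norm.1 hxsum (ε / 3) (by positivity)
    obtain ⟨s₂, hs₂⟩ := summable_iff_vanishing_norm.1 husum (ε / 3) (by positivity)
    set N : ℕ := (s₁ ∪ s₂).sup id + 1 with hNdef
    have hN1 : 1 ≤ N := Nat.le_add_left 1 _
    have hNgt : ∀ i ∈ s₁ ∪ s₂, i < N := fun i hi =>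
      Nat.lt_succ_of_le (Finset.le_sup (f := id) hi)
    have hinj : Function.Injective (fun j : ℕ => (j + 1) * N) := by
      intro a c hac
      simpa using Nat.eq_of_mul_eq_mul_right (Nat.lt_of_lt_of_le Nat.zero_lt_one hN1) hac
    have hinj0 : Function.Injective (fun j : ℕ => j * N) := by
      intro a c hac
      exact Nat.eq_of_mul_eq_mul_right (Nat.lt_of_lt_of_le Nat.zero_lt_one hN1) hac
    set g : ℕ → X := fun j => (T ^ ((j + 1) * N)) x with hg
    set g' : ℕ → X := fun j => u ((j + 1) * N) with hg'
    have hgsum : Summable g := hxsum.comp_injective hinj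
    have hg'sum : Summable g' := husum.comp_injective hinj
    set w : ℕ → X := fun j => u (j * N) with hw
    have hwsum : Summable w := husum.comp_injective hinj0
    set y : X := x + (∑' j, g j) + (∑' j, g' j) with hy
    -- norm bounds on the tails
    have hbound : ∀ (f : ℕ → X) (s : Finset ℕ),
        s ⊆ s₁ ∪ s₂ → (∀ t : Finset ℕ, Disjoint t s → ‖∑ i ∈ t, f i‖ < ε / 3) →
        ∀ t : Finset ℕ, ‖∑ j ∈ t, f ((j + 1) * N)‖ ≤ ε / 3 := by
      intro f s hsub hs t
      have : ∑ j ∈ t, f ((j + 1) * N) = ∑ i ∈ t.image (fun j => (j + 1) * N), f i :=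
        (Finset.sum_image fun a _ c _ hac => hinj hac).symm
      rw [this]
      refine (hs _ ?_).le
      rw [Finset.disjoint_left]
      rintro i hi his
      obtain ⟨j, _, rfl⟩ := Finset.mem_image.1 hi
      have h1 : (j + 1) * N < N := hNgt _ (hsub his)
      have h2 : N ≤ (j + 1) * N := Nat.le_mul_of_pos_left N (Nat.succ_pos j)
      omega
    have hbound' : ∀ (f : ℕ → X) (s : Finset ℕ),
        s ⊆ s₁ ∪ s₂ → (∀ t : Finset ℕ, Disjoint t s → ‖∑ i ∈ t, f i‖ < ε / 3) →
        Summable (fun j => f ((j + 1) * N)) → ‖∑' j, f ((j + 1) * N)‖ ≤ ε / 3 := by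
      intro f s hsub hs hsum
      have htend : Tendsto (fun t : Finset ℕ => ‖∑ j ∈ t, f ((j + 1) * N)‖) atTop
          (nhds ‖∑' j, f ((j + 1) * N)‖) :=
        (continuous_norm.tendsto _).comp hsum.hasSum
      exact le_of_tendsto' htend (hbound f s hsub hs)
    have hng : ‖∑' j, g j‖ ≤ ε / 3 := hbound' _ s₁ Finset.subset_union_left hs₁ hgsum
    have hng' : ‖∑' j, g' j‖ ≤ ε / 3 := hbound' _ s₂ Finset.subset_union_right hs₂ hg'sum
    -- periodicity
    have key : ∀ a c : ℕ, (T ^ a) ((T ^ c) x) = (T ^ (a + c)) x := by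
      intro a c; rw [pow_add, ContinuousLinearMap.mul_apply]
    have hTg : ∀ j, (T ^ N) (g j) = g (j + 1) := by
      intro j
      simp only [hg]
      rw [key]
      congr 1
      ring
    have hTg' : ∀ j, (T ^ N) (g' j) = w j := by
      intro j
      simp only [hg', hw]
      rw [hushift N ((j + 1) * N) (Nat.le_mul_of_pos_left N (Nat.succ_pos j))]
      congr 1
      rw [Nat.add_mul, one_mul, Nat.add_sub_cancel]
    have hTy : (T ^ N) y = y := by
      have m1 : (T ^ N) (∑' j, g j) = ∑' j, (T ^ N) (g j) := (T ^ N).map_tsum hgsum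
      have m2 : (T ^ N) (∑' j, g' j) = ∑' j, (T ^ N) (g' j) := (T ^ N).map_tsum hg'sum
      have e1 : ∑' j, (T ^ N) (g j) = (∑' j, g j) - g 0 := by
        rw [tsum_congr hTg]
        have := Summable.tsum_eq_zero_add hgsum
        rw [this]
        abel
      have e2 : ∑' j, (T ^ N) (g' j) = x + ∑' j, g' j := by
        rw [tsum_congr hTg']
        have := Summable.tsum_eq_zero_add hwsum
        rw [this]
        have hw0 : w 0 = x := by simp [hw, hu0]
        have hwsucc : ∀ j : ℕ, w (j + 1) = g' j := fun j => rfl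
        rw [hw0, tsum_congr hwsucc]
      have hg0 : g 0 = (T ^ N) x := by simp [hg]
      rw [hy, map_add, map_add, m1, m2, e1, e2, hg0]
      abel
    refine ⟨y, ?_, N, hN1, hTy⟩
    have hdyx : dist y x ≤ 2 * (ε / 3) := by
      have : y - x = (∑' j, g j) + (∑' j, g' j) := by rw [hy]; abel
      rw [dist_eq_norm, this]
      calc ‖(∑' j, g j) + (∑' j, g' j)‖ ≤ ‖∑' j, g j‖ + ‖∑' j, g' j‖ := norm_add_le _ _
        _ ≤ 2 * (ε / 3) := by linarith
    have hdxz : dist x z < ε := by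
      rw [hε]; exact Metric.mem_ball.1 hxball
    have : dist y z < r := by
      calc dist y z ≤ dist y x + dist x z := dist_triangle _ _ _
        _ < 2 * (ε / 3) + ε := by linarith
        _ ≤ r := by rw [hε]; linarith
    exact Metric.mem_ball.2 this
end

section
/- Let X be a complex Banach space, T a bounded linear operator on X, x ∈ X, and (u_k)_{k≥0} a sequence in X with u_0 = x such that the families (Tⁿ x)_{n≥0} and (u_n)_{n≥0} are summable and Tⁿ u_k = u_{k−n} for all natural numbers k ≥ n. Then for every integer p ≥ 1 the families (T^{np} x)_{n≥1} and (u_{np})_{n≥1} are summable, the vector x_p := ∑_{n≥1} T^{np} x + x + ∑_{n≥1} u_{np} satisfies T^p x_p = x_p (so x_p is a periodic point of T), and x_p → x as p → ∞. -/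
open Filter

private lemma inj_aux {p : ℕ} (hp : 1 ≤ p) : Function.Injective (fun n : ℕ => (n + 1) * p) := by
  intro a b h
  simp only at h
  have := Nat.eq_of_mul_eq_mul_right (Nat.lt_of_lt_of_le Nat.zero_lt_one hp) h
  omega

private lemma tail_zero {X : Type*} [NormedAddCommGroup X] [CompleteSpace X] (f : ℕ → X) (hf : Summable f) :
    Tendsto (fun p : ℕ => ∑' n : ℕ, f ((n + 1) * p)) atTop (nhds 0) := by
  rw [Metric.tendsto_atTop]
  intro ε hε
  obtain ⟨s, hs⟩ := summable_iff_vanishing.mp hf (Metric.closedBall 0 (ε / 2))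
    (Metric.closedBall_mem_nhds 0 (by linarith))
  refine ⟨s.sup id + 1, fun p hp => ?_⟩
  have hp1 : 1 ≤ p := le_trans (Nat.le_add_left 1 _) hp
  have hg : Summable (fun n : ℕ => f ((n + 1) * p)) := hf.comp_injective (inj_aux hp1)
  have hmem : ∑' n : ℕ, f ((n + 1) * p) ∈ Metric.closedBall (0 : X) (ε / 2) := by
    refine Metric.isClosed_closedBall.mem_of_tendsto hg.hasSum.tendsto_sum_nat
      (Eventually.of_forall fun m => ?_)
    have : ∑ n ∈ Finset.range m, f ((n + 1) * p)
        = ∑ i ∈ (Finset.range m).image (fun n => (n + 1) * p), f i := by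
      rw [Finset.sum_image]
      intro a _ b _ h
      exact inj_aux hp1 h
    rw [this]
    apply hs
    rw [Finset.disjoint_left]
    intro a ha has
    simp only [Finset.mem_image, Finset.mem_range] at ha
    obtain ⟨n, _, rfl⟩ := ha
    have h1 : (n + 1) * p ≤ s.sup id := Finset.le_sup (f := id) has
    have h2 : p ≤ (n + 1) * p := Nat.le_mul_of_pos_left p (Nat.succ_pos n)
    omega
  simp only [Metric.mem_closedBall, dist_zero_right] at hmem
  rw [dist_zero_right]
  linarith

/-- Construction of periodic points in the proof of the Chaoticity Criterion.
Given `u : ℕ → X` with `u 0 = x`, `∑ Tⁿ x` and `∑ uₙ` summable, and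
`Tⁿ (u k) = u (k - n)` for `k ≥ n`, for every `p ≥ 1` the families
`(T^{np} x)_{n ≥ 1}` and `(u_{np})_{n ≥ 1}` are summable, the vector
`x_p = ∑_{n ≥ 1} T^{np} x + x + ∑_{n ≥ 1} u_{np}` is a fixed point of `T^p`
(hence a periodic point of `T`), and `x_p → x` as `p → ∞`. -/
theorem stmt1 {X : Type*} [NormedAddCommGroup X] [NormedSpace ℂ X] [CompleteSpace X]
    (T : X →L[ℂ] X) (x : X) (u : ℕ → X) (hu0 : u 0 = x)
    (hTx : Summable fun n : ℕ => (T ^ n) x) (hu : Summable u)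
    (huT : ∀ n k : ℕ, n ≤ k → (T ^ n) (u k) = u (k - n)) :
    (∀ p : ℕ, 1 ≤ p →
      Summable (fun n : ℕ => (T ^ ((n + 1) * p)) x) ∧
      Summable (fun n : ℕ => u ((n + 1) * p)) ∧
      (T ^ p) ((∑' n : ℕ, (T ^ ((n + 1) * p)) x) + x + ∑' n : ℕ, u ((n + 1) * p)) =
        (∑' n : ℕ, (T ^ ((n + 1) * p)) x) + x + ∑' n : ℕ, u ((n + 1) * p)) ∧
    Tendsto (fun p : ℕ => (∑' n : ℕ, (T ^ ((n + 1) * p)) x) + x + ∑' n : ℕ, u ((n + 1) * p))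
      atTop (nhds x) := by
  constructor
  · intro p hp
    have hpos : 0 < p := hp
    have hinj := inj_aux hp
    have hA : Summable (fun n : ℕ => (T ^ ((n + 1) * p)) x) := hTx.comp_injective hinj
    have hB : Summable (fun n : ℕ => u ((n + 1) * p)) := hu.comp_injective hinj
    refine ⟨hA, hB, ?_⟩
    -- action of T^p
    have h1 : ∀ n : ℕ, (T ^ p) ((T ^ ((n + 1) * p)) x) = (T ^ ((n + 1 + 1) * p)) x := by
      intro n
      rw [← ContinuousLinearMap.mul_apply, ← pow_add]
      congr 1
      ring_nf
    have h2 : ∀ n : ℕ, (T ^ p) (u ((n + 1) * p)) = u (n * p) := by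
      intro n
      rw [huT p ((n + 1) * p) (Nat.le_mul_of_pos_left p (Nat.succ_pos n))]
      congr 1
      simp [Nat.add_mul]
    have hBn : Summable (fun n : ℕ => u (n * p)) := by
      apply hu.comp_injective
      intro a b h
      simpa using Nat.eq_of_mul_eq_mul_right hpos h
    have mapA : (T ^ p) (∑' n : ℕ, (T ^ ((n + 1) * p)) x)
        = ∑' n : ℕ, (T ^ ((n + 1 + 1) * p)) x := by
      rw [ContinuousLinearMap.map_tsum _ hA]
      exact tsum_congr h1
    have mapB : (T ^ p) (∑' n : ℕ, u ((n + 1) * p)) = x + ∑' n : ℕ, u ((n + 1) * p) := by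
      rw [ContinuousLinearMap.map_tsum _ hB]
      have : ∑' n : ℕ, (T ^ p) (u ((n + 1) * p)) = ∑' n : ℕ, u ((n + 1) * p) + x := by
        calc ∑' n : ℕ, (T ^ p) (u ((n + 1) * p)) = ∑' n : ℕ, u (n * p) := tsum_congr h2
        _ = u (0 * p) + ∑' n : ℕ, u ((n + 1) * p) := Summable.tsum_eq_zero_add hBn
        _ = ∑' n : ℕ, u ((n + 1) * p) + x := by rw [Nat.zero_mul, hu0, add_comm]
      rw [this, add_comm]
    have shiftA : ∑' n : ℕ, (T ^ ((n + 1) * p)) x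
        = (T ^ (1 * p)) x + ∑' n : ℕ, (T ^ ((n + 1 + 1) * p)) x := Summable.tsum_eq_zero_add hA
    rw [map_add, map_add, mapA, mapB, shiftA]
    rw [one_mul]
    abel
  · have hA0 := tail_zero (fun n : ℕ => (T ^ n) x) hTx
    have hB0 := tail_zero u hu
    have := (hA0.add (tendsto_const_nhds (x := x))).add hB0
    simpa using this
end

section
/- Let H be a separable analytic reproducing kernel Hilbert space of E-valued functions on 𝔻 on which the multiplication operator M_z is bounded, and let E₀ be a subset of E whose linear span is dense in E. If there exists a strictly increasing sequence (n_k) of natural numbers such that sup_{η ∈ E₀} (1/(n_k!)²)‖K_{n_k,η}‖²_H → 0 as k → ∞ (i.e., liminf_n (1/(n!)²)‖K_{n,η}‖² = 0 uniformly in η ∈ E₀), then M_z* is hypercyclic on H. -/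
/-!
Put `e n η = K n η / n!`. Differentiating `z f` at `0` shows that `M_z*` acts on these vectors as
a backward shift: `M_z* e (n+1) η = e n η` and `M_z* e 0 η = 0`. A vector orthogonal to all of
them has a function with vanishing Taylor coefficients at `0`, so their span is dense. On this
span `M_z*` is eventually zero, while a vector `v` of the span is, for some level `M` and every
`n ≥ M`, the image under `M_z* ^ (n - M)` of a vector of norm `O(sup_η ‖e n η‖)`, which is small
along `n_k`. Hence `M_z*` is topologically transitive, and Birkhoff's transitivity theorem gives
a dense orbit.
-/

open Metric Filter ContinuousLinearMap

universe u v w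

theorem iteratedDerivWithin_id_smul {𝕜 F : Type*} [NontriviallyNormedField 𝕜]
    [NormedAddCommGroup F] [NormedSpace 𝕜 F] {g : 𝕜 → F} {s : Set 𝕜} {x : 𝕜} {n : ℕ}
    (hs : UniqueDiffOn 𝕜 s) (hx : x ∈ s) (hg : ContDiffWithinAt 𝕜 (n + 1) g s x) :
    iteratedDerivWithin (n + 1) (fun w => w • g w) s x =
      x • iteratedDerivWithin (n + 1) g s x + ((n : 𝕜) + 1) • iteratedDerivWithin n g s x := by
  rw [show (fun w => w • g w) = (id : 𝕜 → 𝕜) • g from rfl,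
    iteratedDerivWithin_smul hx hs contDiffWithinAt_id (by exact_mod_cast hg),
    Finset.sum_range_succ', Finset.sum_range_succ']
  simp [iteratedDerivWithin_id hx hs, ← Nat.cast_smul_eq_nsmul 𝕜, add_comm]

theorem Complex.eqOn_zero_of_iteratedDerivWithin_eq_zero {F : Type*} [NormedAddCommGroup F]
    [NormedSpace ℂ F] [CompleteSpace F] {g : ℂ → F} {c : ℂ} {r : ℝ}
    (hg : DifferentiableOn ℂ g (ball c r))
    (h : ∀ n, iteratedDerivWithin n g (ball c r) c = 0) : Set.EqOn g 0 (ball c r) := by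
  intro z hz
  have hc : c ∈ ball c r := mem_ball_self (pos_of_mem_ball hz)
  have hsum := Complex.hasSum_taylorSeries_on_ball hg hz
  have h' : ∀ n, iteratedDeriv n g c = 0 := fun n => by
    rw [← iteratedDerivWithin_of_isOpen isOpen_ball hc, h]
  simp only [h', smul_zero] at hsum
  exact hsum.unique hasSum_zero

theorem dense_span_of_forall_inner_eq_zero {𝕜 X : Type*} [RCLike 𝕜] [NormedAddCommGroup X]
    [InnerProductSpace 𝕜 X] [CompleteSpace X] {s : Set X}
    (h : ∀ x, (∀ v ∈ s, inner 𝕜 v x = 0) → x = 0) : Dense (Submodule.span 𝕜 s : Set X) := by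
  rw [Submodule.dense_iff_topologicalClosure_eq_top, Submodule.topologicalClosure_eq_top_iff,
    Submodule.eq_bot_iff]
  exact fun x hx =>
    h x fun v hv => (Submodule.mem_orthogonal _ x).mp hx v (Submodule.subset_span hv)

theorem exists_dense_range_apply_of_transitive {X ι : Type*} [TopologicalSpace X]
    [BaireSpace X] [SecondCountableTopology X] [Nonempty X]
    {T : ι → X → X} (hT : ∀ m, Continuous (T m))
    (htrans : ∀ U V : Set X, IsOpen U → IsOpen V → U.Nonempty → V.Nonempty →
      ∃ m, (U ∩ T m ⁻¹' V).Nonempty) :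
    ∃ x, Dense (Set.range fun m => T m x) := by
  obtain ⟨b, hbc, hb0, hb⟩ := TopologicalSpace.exists_countable_basis X
  have hG : Dense (⋂ V ∈ b, ⋃ m, T m ⁻¹' V) := by
    refine dense_biInter_of_isOpen
      (fun V hV => isOpen_iUnion fun m => (hb.isOpen hV).preimage (hT m)) hbc fun V hV => ?_
    refine dense_iff_inter_open.mpr fun U hU hUne => ?_
    obtain ⟨m, x, hxU, hxV⟩ := htrans U V hU (hb.isOpen hV) hUne
      (Set.nonempty_iff_ne_empty.mpr fun h => hb0 (h ▸ hV))
    exact ⟨x, hxU, Set.mem_iUnion.mpr ⟨m, hxV⟩⟩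
  obtain ⟨x, hx⟩ := hG.nonempty
  refine ⟨x, hb.dense_iff.mpr fun V hV _ => ?_⟩
  obtain ⟨m, hm⟩ := Set.mem_iUnion.mp (Set.mem_iInter₂.mp hx V hV)
  exact ⟨T m x, hm, m, rfl⟩

section BackwardShift

variable {𝕜 : Type u} {X : Type v} {ι : Type w} [NontriviallyNormedField 𝕜] [NormedAddCommGroup X]
  [NormedSpace 𝕜 X] {T : X →L[𝕜] X} {e : ℕ → ι → X}

theorem pow_apply_add_eq (hsucc : ∀ n i, T (e (n + 1) i) = e n i) (j n : ℕ) (i : ι) :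
    (T ^ j) (e (n + j) i) = e n i := by
  induction j with
  | zero => rfl
  | succ j ih => rw [pow_succ, mul_apply_eq_comp, ← add_assoc, hsucc, ih]

theorem pow_apply_eq_zero (he0 : ∀ i, T (e 0 i) = 0) (hsucc : ∀ n i, T (e (n + 1) i) = e n i)
    {n j : ℕ} (hnj : n < j) (i : ι) : (T ^ j) (e n i) = 0 := by
  obtain ⟨q, rfl⟩ := Nat.exists_eq_add_of_lt hnj
  rw [show n + q + 1 = q + (n + 1) by omega, pow_add, pow_succ', mul_apply_eq_comp,
    mul_apply_eq_comp]
  simpa [he0] using congrArg (fun y => (T ^ q) (T y)) (pow_apply_add_eq hsucc n 0 i)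

theorem eventually_pow_apply_eq_zero (he0 : ∀ i, T (e 0 i) = 0)
    (hsucc : ∀ n i, T (e (n + 1) i) = e n i) {u : X}
    (hu : u ∈ Submodule.span 𝕜 (Set.range (Function.uncurry e))) :
    ∀ᶠ j in atTop, (T ^ j) u = 0 := by
  induction hu using Submodule.span_induction with
  | mem _ hv =>
    obtain ⟨⟨n, i⟩, rfl⟩ := hv
    exact eventually_gt_atTop n |>.mono fun j hj => pow_apply_eq_zero he0 hsucc hj i
  | zero => exact .of_forall fun j => map_zero _
  | add _ _ _ _ hv hw => filter_upwards [hv, hw] with j hvj hwj; rw [map_add, hvj, hwj, add_zero]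
  | smul a _ _ hv => filter_upwards [hv] with j hvj; rw [map_smul, hvj, smul_zero]

theorem exists_pow_apply_eq_of_norm_le (hsucc : ∀ n i, T (e (n + 1) i) = e n i) {v : X}
    (hv : v ∈ Submodule.span 𝕜 (Set.range (Function.uncurry e))) :
    ∃ M : ℕ, ∃ C : ℝ, ∀ n ≥ M, ∀ δ : ℝ, (∀ i, ‖e n i‖ ≤ δ) →
      ∃ c, ‖c‖ ≤ C * δ ∧ (T ^ (n - M)) c = v := by
  induction hv using Submodule.span_induction with
  | mem _ hv =>
    obtain ⟨⟨p, i⟩, rfl⟩ := hv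
    refine ⟨p, 1, fun n hn δ hδ => ⟨e n i, by simpa using hδ i, ?_⟩⟩
    simpa [Nat.add_sub_cancel' hn] using pow_apply_add_eq hsucc (n - p) p i
  | zero => exact ⟨0, 0, fun n _ δ _ => ⟨0, by simp, map_zero _⟩⟩
  | add v w _ _ hv hw =>
    obtain ⟨M₁, C₁, hv⟩ := hv
    obtain ⟨M₂, C₂, hw⟩ := hw
    -- raise both levels to `max M₁ M₂` by first applying powers of `T`
    have pow_sub_pow_sub {M' M n : ℕ} (hM' : M' ≤ M) (hn : M ≤ n) (c : X) :
        (T ^ (n - M)) ((T ^ (M - M')) c) = (T ^ (n - M')) c := by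
      rw [← mul_apply_eq_comp, ← pow_add, Nat.sub_add_sub_cancel hn hM']
    set M := max M₁ M₂
    refine ⟨M, ‖T ^ (M - M₁)‖ * C₁ + ‖T ^ (M - M₂)‖ * C₂, fun n hn δ hδ => ?_⟩
    obtain ⟨c₁, hc₁, hTc₁⟩ := hv n (le_of_max_le_left hn) δ hδ
    obtain ⟨c₂, hc₂, hTc₂⟩ := hw n (le_of_max_le_right hn) δ hδ
    refine ⟨(T ^ (M - M₁)) c₁ + (T ^ (M - M₂)) c₂, ?_, ?_⟩
    · calc _ ≤ ‖T ^ (M - M₁)‖ * ‖c₁‖ + ‖T ^ (M - M₂)‖ * ‖c₂‖ :=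
            (norm_add_le _ _).trans (add_le_add (le_opNorm _ _) (le_opNorm _ _))
        _ ≤ ‖T ^ (M - M₁)‖ * (C₁ * δ) + ‖T ^ (M - M₂)‖ * (C₂ * δ) := by gcongr
        _ = _ := by ring
    · rw [map_add, pow_sub_pow_sub (le_max_left _ _) hn, pow_sub_pow_sub (le_max_right _ _) hn,
        hTc₁, hTc₂]
  | smul a v _ hv =>
    obtain ⟨M, C, hv⟩ := hv
    refine ⟨M, ‖a‖ * C, fun n hn δ hδ => ?_⟩
    obtain ⟨c, hc, hTc⟩ := hv n hn δ hδ
    refine ⟨a • c, ?_, by rw [map_smul, hTc]⟩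
    rw [norm_smul, mul_assoc]
    exact mul_le_mul_of_nonneg_left hc (norm_nonneg a)

theorem exists_dense_orbit_of_backward_shift [CompleteSpace X] [TopologicalSpace.SeparableSpace X]
    (he0 : ∀ i, T (e 0 i) = 0) (hsucc : ∀ n i, T (e (n + 1) i) = e n i)
    (hdense : Dense (Submodule.span 𝕜 (Set.range (Function.uncurry e)) : Set X))
    (hsmall : ∀ ε > 0, ∃ᶠ n in atTop, ∀ i, ‖e n i‖ ≤ ε) :
    ∃ g : X, Dense (Set.range fun m : ℕ => (T ^ m) g) := by
  have := UniformSpace.secondCountable_of_separable X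
  refine exists_dense_range_apply_of_transitive (fun m => (T ^ m).continuous)
    fun U V hU hV hUne hVne => ?_
  obtain ⟨u, hu, huU⟩ := hdense.exists_mem_open hU hUne
  obtain ⟨v, hv, hvV⟩ := hdense.exists_mem_open hV hVne
  obtain ⟨ε, hε, hball⟩ := Metric.isOpen_iff.mp hU u huU
  obtain ⟨N, hN⟩ := (eventually_pow_apply_eq_zero he0 hsucc hu).exists_forall_of_atTop
  obtain ⟨M, C, hC⟩ := exists_pow_apply_eq_of_norm_le hsucc hv
  obtain ⟨δ, hδ, hCδ⟩ := exists_pos_mul_lt hε C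
  obtain ⟨n, hn, hen⟩ := (hsmall δ hδ).forall_exists_of_atTop (N + M)
  obtain ⟨c, hc, hTc⟩ := hC n (by omega) δ hen
  refine ⟨n - M, u + c, hball ?_, ?_⟩
  · rw [mem_ball, dist_self_add_left]
    exact hc.trans_lt hCδ
  · rw [Set.mem_preimage, map_add, hN _ (by omega), hTc, zero_add]
    exact hvV

theorem frequently_norm_inv_factorial_smul_le {X ι : Type*} [NormedAddCommGroup X]
    [NormedSpace ℂ X] {K : ℕ → ι → X} {s : Set ι}
    (h : ∃ nk : ℕ → ℕ, StrictMono nk ∧ ∀ ε > (0 : ℝ), ∃ N : ℕ, ∀ k ≥ N, ∀ i ∈ s,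
      (1 / ((nk k).factorial : ℝ) ^ 2) * ‖K (nk k) i‖ ^ 2 < ε) :
    ∀ ε > 0, ∃ᶠ n in atTop, ∀ i ∈ s, ‖((n.factorial : ℂ)⁻¹) • K n i‖ ≤ ε := by
  obtain ⟨nk, hmono, hlim⟩ := h
  intro ε hε
  obtain ⟨N, hN⟩ := hlim (ε ^ 2) (by positivity)
  refine frequently_atTop.mpr fun M => ⟨nk (max N M), (le_max_right N M).trans hmono.le_apply,
    fun i hi => ?_⟩
  have hsq : (((nk (max N M)).factorial : ℝ)⁻¹ * ‖K (nk (max N M)) i‖) ^ 2 < ε ^ 2 := by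
    simpa [mul_pow, inv_pow] using hN _ (le_max_left N M) i hi
  rw [norm_smul, norm_inv, Complex.norm_natCast]
  exact (abs_lt_of_sq_lt_sq' hsq hε.le).2.le

section AnalyticRKHS

variable {H : Type u} {E : Type v} [NormedAddCommGroup H] [InnerProductSpace ℂ H]
  [NormedAddCommGroup E] [InnerProductSpace ℂ E] (ι : H →ₗ[ℂ] (ℂ → E)) (K : ℕ → E → H)

theorem adjoint_apply_kernel_zero [CompleteSpace H] {Mz : H →L[ℂ] H}
    (hMz : ∀ f : H, ∀ w ∈ ball (0 : ℂ) 1, ι (Mz f) w = w • ι f w)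
    (hK : ∀ (n : ℕ) (η : E) (f : H),
      inner ℂ f (K n η) = inner ℂ (iteratedDerivWithin n (ι f) (ball (0 : ℂ) 1) 0) η)
    (η : E) : adjoint Mz (K 0 η) = 0 :=
  ext_inner_left ℂ fun f => by
    simp [adjoint_inner_right, hK, hMz f 0 (mem_ball_self one_pos)]

theorem adjoint_apply_kernel_succ [CompleteSpace H] [CompleteSpace E] {Mz : H →L[ℂ] H}
    (hanal : ∀ f : H, DifferentiableOn ℂ (ι f) (ball (0 : ℂ) 1))
    (hMz : ∀ f : H, ∀ w ∈ ball (0 : ℂ) 1, ι (Mz f) w = w • ι f w)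
    (hK : ∀ (n : ℕ) (η : E) (f : H),
      inner ℂ f (K n η) = inner ℂ (iteratedDerivWithin n (ι f) (ball (0 : ℂ) 1) 0) η)
    (n : ℕ) (η : E) : adjoint Mz (K (n + 1) η) = ((n : ℂ) + 1) • K n η := by
  refine ext_inner_left ℂ fun f => ?_
  have h0 : (0 : ℂ) ∈ ball (0 : ℂ) 1 := mem_ball_self one_pos
  rw [adjoint_inner_right, hK, iteratedDerivWithin_congr (hMz f) h0,
    iteratedDerivWithin_id_smul isOpen_ball.uniqueDiffOn h0
      ((hanal f).contDiffOn isOpen_ball 0 h0), zero_smul, zero_add, inner_smul_left,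
    inner_smul_right, hK]
  simp

theorem eq_zero_of_forall_inner_kernel_eq_zero [CompleteSpace E]
    (hinj : ∀ f g : H, Set.EqOn (ι f) (ι g) (ball (0 : ℂ) 1) → f = g)
    (hanal : ∀ f : H, DifferentiableOn ℂ (ι f) (ball (0 : ℂ) 1))
    (hK : ∀ (n : ℕ) (η : E) (f : H),
      inner ℂ f (K n η) = inner ℂ (iteratedDerivWithin n (ι f) (ball (0 : ℂ) 1) 0) η)
    {E₀ : Set E} (hE₀ : Dense (Submodule.span ℂ E₀ : Set E)) {x : H}
    (hx : ∀ n, ∀ η ∈ E₀, inner ℂ (K n η) x = 0) : x = 0 := by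
  have hderiv (n : ℕ) : iteratedDerivWithin n (ι x) (ball (0 : ℂ) 1) 0 = 0 := by
    have hspan : Submodule.span ℂ E₀ ≤
        LinearMap.ker (innerₛₗ ℂ (iteratedDerivWithin n (ι x) (ball (0 : ℂ) 1) 0)) :=
      Submodule.span_le.mpr fun η hη => by simp [← hK, inner_eq_zero_symm.mp (hx n η hη)]
    exact hE₀.eq_zero_of_inner_left ℂ fun v hv => by simpa using hspan hv
  refine hinj x 0 ?_
  rw [map_zero]
  exact Complex.eqOn_zero_of_iteratedDerivWithin_eq_zero (hanal x) hderiv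

end AnalyticRKHS

theorem stmt6_general {H E : Type*}
    [NormedAddCommGroup H] [InnerProductSpace ℂ H] [CompleteSpace H]
    [TopologicalSpace.SeparableSpace H]
    [NormedAddCommGroup E] [InnerProductSpace ℂ E] [CompleteSpace E]
    (ι : H →ₗ[ℂ] (ℂ → E))
    (hinj : ∀ f g : H, Set.EqOn (ι f) (ι g) (ball (0 : ℂ) 1) → f = g)
    (hanal : ∀ f : H, DifferentiableOn ℂ (ι f) (ball (0 : ℂ) 1))
    (Mz : H →L[ℂ] H)
    (hMz : ∀ f : H, ∀ w ∈ ball (0 : ℂ) 1, ι (Mz f) w = w • ι f w)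
    (K : ℕ → E → H)
    (hK : ∀ (n : ℕ) (η : E) (f : H),
      (inner ℂ f (K n η) : ℂ) =
        (inner ℂ (iteratedDerivWithin n (ι f) (ball (0 : ℂ) 1) 0) η : ℂ))
    (E₀ : Set E)
    (hE₀ : Dense ((Submodule.span ℂ E₀ : Submodule ℂ E) : Set E))
    (hlim : ∃ nk : ℕ → ℕ, StrictMono nk ∧
      ∀ ε > (0 : ℝ), ∃ N : ℕ, ∀ k ≥ N, ∀ η ∈ E₀,
        (1 / ((nk k).factorial : ℝ) ^ 2) * ‖K (nk k) η‖ ^ 2 < ε) :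
    ∃ g : H, Dense (Set.range fun m : ℕ => ((adjoint Mz) ^ m) g) := by
  set e : ℕ → E₀ → H := fun n η => ((n.factorial : ℂ)⁻¹) • K n η
  have he0 (η : E₀) : adjoint Mz (e 0 η) = 0 := by
    simp [e, adjoint_apply_kernel_zero ι K hMz hK]
  have hsucc (n : ℕ) (η : E₀) : adjoint Mz (e (n + 1) η) = e n η := by
    simp only [e, map_smul, adjoint_apply_kernel_succ ι K hanal hMz hK, smul_smul,
      Nat.factorial_succ]
    push_cast
    field_simp
  have hspan : Dense (Submodule.span ℂ (Set.range (Function.uncurry e)) : Set H) :=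
    dense_span_of_forall_inner_eq_zero fun x hx =>
      eq_zero_of_forall_inner_kernel_eq_zero ι K hinj hanal hK hE₀ fun n η hη => by
        simpa [e, inner_smul_left, Nat.factorial_ne_zero] using hx _ ⟨(n, ⟨η, hη⟩), rfl⟩
  exact exists_dense_orbit_of_backward_shift he0 hsucc hspan fun ε hε =>
    (frequently_norm_inv_factorial_smul_le hlim ε hε).mono fun n hn η => hn η η.2

/-- Theorem (hypercyclicity part): Let `H` be a separable analytic reproducing kernel
Hilbert space of `E`-valued functions on the unit disc on which `M_z` is bounded, and let
`E₀ ⊆ E` have dense linear span. If there is a strictly increasing sequence `n_k` such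
that `(1/(n_k!)²)‖K_{n_k,η}‖² → 0` uniformly in `η ∈ E₀` (i.e.
`liminf (1/(n!)²)‖K_{n,η}‖² = 0` uniformly in `η ∈ E₀`), then `M_z*` is hypercyclic. -/
theorem stmt6 {H E : Type*}
    [NormedAddCommGroup H] [InnerProductSpace ℂ H] [CompleteSpace H]
    [TopologicalSpace.SeparableSpace H]
    [NormedAddCommGroup E] [InnerProductSpace ℂ E] [CompleteSpace E]
    (ι : H →ₗ[ℂ] (ℂ → E))
    (hinj : ∀ f g : H, Set.EqOn (ι f) (ι g) (ball (0 : ℂ) 1) → f = g)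
    (hanal : ∀ f : H, DifferentiableOn ℂ (ι f) (ball (0 : ℂ) 1))
    (heval : ∀ w ∈ ball (0 : ℂ) 1, Continuous fun f : H => ι f w)
    (Mz : H →L[ℂ] H)
    (hMz : ∀ f : H, ∀ w ∈ ball (0 : ℂ) 1, ι (Mz f) w = w • ι f w)
    (K : ℕ → E → H)
    (hK : ∀ (n : ℕ) (η : E) (f : H),
      (inner ℂ f (K n η) : ℂ) =
        (inner ℂ (iteratedDerivWithin n (ι f) (ball (0 : ℂ) 1) 0) η : ℂ))
    (E₀ : Set E)
    (hE₀ : Dense ((Submodule.span ℂ E₀ : Submodule ℂ E) : Set E))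
    (hlim : ∃ nk : ℕ → ℕ, StrictMono nk ∧
      ∀ ε > (0 : ℝ), ∃ N : ℕ, ∀ k ≥ N, ∀ η ∈ E₀,
        (1 / ((nk k).factorial : ℝ) ^ 2) * ‖K (nk k) η‖ ^ 2 < ε) :
    ∃ g : H, Dense (Set.range fun m : ℕ => ((adjoint Mz) ^ m) g) :=
  stmt6_general ι hinj hanal Mz hMz K hK E₀ hE₀ hlim
end BackwardShift
end

section
/- Let H be a separable analytic reproducing kernel Hilbert space of E-valued functions on 𝔻 on which the multiplication operator M_z is bounded, and let E₀ be a subset of E whose linear span is dense in E. If for every η ∈ E₀ the doubly indexed family c_{n,m} := (1/(n!·m!)) ⟨K_{m,η}, K_{n,η}⟩_H (n, m ∈ ℕ) is F-summable, then M_z* is chaotic on H. -/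
/-!
The normalised kernels `e_n = K_{n,η} / n!` form, for each `η`, a Jordan chain of `M_z*` at `0`:
`M_z* e_{n+1} = e_n` and `M_z* e_0 = 0`, because `(z f)⁽ⁿ⁾(0) = n f⁽ⁿ⁻¹⁾(0)`. The double sum of
`c_{n,m}` over `F × F` is `‖∑_{n ∈ F} e_n‖²`, so `F`-summability says exactly that `∑ₙ e_n`
converges unconditionally, and the `e_n` span a dense subspace because a function orthogonal to
all of them has vanishing Taylor coefficients at `0`.

On that span the powers of `M_z*` vanish eventually, while `e_{m+n} → 0` is a preimage of `e_m`
under `(M_z*)ⁿ`; Kitai's criterion and Birkhoff's transitivity theorem give a dense orbit. For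
the periodic points, `∑ⱼ e_{n+jk}` is fixed by `(M_z*)ᵏ` and tends to `e_n` as `k → ∞`.
-/

open Metric Filter ContinuousLinearMap

/-- A doubly indexed family `c : ℕ → ℕ → ℂ` is `F`-summable if for every `ε > 0` there is
`N ∈ ℕ` such that `|∑_{n ∈ F} ∑_{m ∈ F} c n m| < ε` for every finite set
`F ⊆ {N, N+1, …}`. -/
def FSummable (c : ℕ → ℕ → ℂ) : Prop :=
  ∀ ε > (0 : ℝ), ∃ N : ℕ, ∀ F : Finset ℕ, (∀ n ∈ F, N ≤ n) →
    ‖∑ n ∈ F, ∑ m ∈ F, c n m‖ < ε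

open Function Set TopologicalSpace
open scoped Topology Nat InnerProductSpace

local notation "𝔻" => ball (0 : ℂ) 1

theorem exists_denseRange_of_forall_inter_preimage_nonempty {ι X Y : Type*}
    [TopologicalSpace X] [BaireSpace X] [Nonempty X] [TopologicalSpace Y]
    [SecondCountableTopology Y] {T : ι → X → Y} (hT : ∀ i, Continuous (T i))
    (htrans : ∀ (U : Set X) (V : Set Y), IsOpen U → U.Nonempty → IsOpen V → V.Nonempty →
      ∃ i, (U ∩ T i ⁻¹' V).Nonempty) :
    ∃ x, DenseRange fun i => T i x := by
  have hb := isBasis_countableBasis Y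
  have hdense : Dense (⋂ V ∈ {V ∈ countableBasis Y | V.Nonempty}, ⋃ i, T i ⁻¹' V) := by
    refine dense_biInter_of_isOpen
      (fun V hV => isOpen_iUnion fun i => (hb.isOpen hV.1).preimage (hT i))
      ((countable_countableBasis Y).mono (sep_subset _ _)) fun V hV => ?_
    refine dense_iff_inter_open.mpr fun U hU hU' => ?_
    simpa only [inter_iUnion, nonempty_iUnion] using htrans U V hU hU' (hb.isOpen hV.1) hV.2
  obtain ⟨x, hx⟩ := hdense.nonempty
  refine ⟨x, hb.dense_iff.mpr fun V hV hV' => ?_⟩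
  obtain ⟨i, hi⟩ := mem_iUnion.mp (mem_iInter₂.mp hx V ⟨hV, hV'⟩)
  exact ⟨T i x, hi, i, rfl⟩

section JordanChain

variable {R X : Type*} [Semiring R] [TopologicalSpace X] [AddCommMonoid X] [Module R X]

structure IsJordanChain (T : X →L[R] X) (e : ℕ → X) : Prop where
  apply_zero : T (e 0) = 0
  apply_succ : ∀ n, T (e (n + 1)) = e n

namespace IsJordanChain

variable {T : X →L[R] X} {e : ℕ → X}

theorem pow_apply_add (h : IsJordanChain T e) (k n : ℕ) : (T ^ k) (e (k + n)) = e n := by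
  induction k with
  | zero => rw [zero_add, pow_zero, one_apply_eq_self]
  | succ k ih => rw [pow_succ, mul_apply_eq_comp, add_right_comm, h.apply_succ, ih]

theorem pow_apply_of_lt (h : IsJordanChain T e) {k n : ℕ} (hnk : n < k) : (T ^ k) (e n) = 0 := by
  obtain ⟨j, rfl⟩ := Nat.exists_eq_add_of_lt hnk
  have h₀ : (T ^ n) (e n) = e 0 := h.pow_apply_add n 0
  rw [show n + j + 1 = j + 1 + n by omega, pow_add, mul_apply_eq_comp, h₀, pow_succ,
    mul_apply_eq_comp, h.apply_zero, map_zero]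

end IsJordanChain

theorem isJordanChain_inv_factorial_smul {𝕜 : Type*} [Field 𝕜] [CharZero 𝕜] [Module 𝕜 X]
    {T : X →L[𝕜] X} {v : ℕ → X} (hT : ∀ n, T (v n) = (n : 𝕜) • v (n - 1)) :
    IsJordanChain T fun n => (n ! : 𝕜)⁻¹ • v n where
  apply_zero := by simp [hT]
  apply_succ n := by
    rw [map_smul, hT, smul_smul, Nat.add_sub_cancel, Nat.factorial_succ]
    congr 1
    push_cast
    field_simp

namespace ContinuousLinearMap

def periodicSubmodule (T : X →L[R] X) : Submodule R X where
  carrier := {y | ∃ k, 1 ≤ k ∧ (T ^ k) y = y}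
  add_mem' := by
    rintro y z ⟨k, hk, hy⟩ ⟨l, hl, hz⟩
    have hfix : ∀ {S : X →L[R] X} {x : X} (m : ℕ), S x = x → (S ^ m) x = x := by
      intro S x m hx
      induction m with
      | zero => rfl
      | succ m ih => rw [pow_succ, mul_apply_eq_comp, hx, ih]
    have hy' : (T ^ (k * l)) y = y := by rw [pow_mul]; exact hfix l hy
    have hz' : (T ^ (k * l)) z = z := by rw [mul_comm, pow_mul]; exact hfix k hz
    exact ⟨k * l, Nat.one_le_iff_ne_zero.mpr (by positivity), by rw [map_add, hy', hz']⟩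
  zero_mem' := ⟨1, le_rfl, map_zero _⟩
  smul_mem' := by
    rintro c y ⟨k, hk, hy⟩
    exact ⟨k, hk, by rw [map_smul, hy]⟩

variable [ContinuousAdd X] [ContinuousConstSMul R X]

def stableSubmodule (T : X →L[R] X) : Submodule R X where
  carrier := {x | Tendsto (fun n => (T ^ n) x) atTop (𝓝 0)}
  add_mem' hx hy := by simpa only [mem_ofPred_eq, map_add, add_zero] using hx.add hy
  zero_mem' := by simpa only [mem_ofPred_eq, map_zero] using tendsto_const_nhds
  smul_mem' c x hx := by simpa only [mem_ofPred_eq, map_smul, smul_zero] using hx.const_smul c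

def vanishingPreimageSubmodule (T : X →L[R] X) : Submodule R X where
  carrier := {y | ∃ z : ℕ → X, (∀ n, (T ^ n) (z n) = y) ∧ Tendsto z atTop (𝓝 0)}
  add_mem' := by
    rintro _ _ ⟨z₁, hz₁, hlim₁⟩ ⟨z₂, hz₂, hlim₂⟩
    exact ⟨fun n => z₁ n + z₂ n, fun n => by rw [map_add, hz₁, hz₂],
      by simpa only [add_zero] using hlim₁.add hlim₂⟩
  zero_mem' := ⟨0, fun n => map_zero _, tendsto_const_nhds⟩
  smul_mem' := by
    rintro c _ ⟨z, hz, hlim⟩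
    exact ⟨fun n => c • z n, fun n => by rw [map_smul, hz],
      by simpa only [smul_zero] using hlim.const_smul c⟩

theorem exists_inter_preimage_pow_nonempty {T : X →L[R] X}
    (hs : Dense (T.stableSubmodule : Set X)) (hu : Dense (T.vanishingPreimageSubmodule : Set X))
    {U V : Set X} (hU : IsOpen U) (hU' : U.Nonempty) (hV : IsOpen V) (hV' : V.Nonempty) :
    ∃ n, (U ∩ ⇑(T ^ n) ⁻¹' V).Nonempty := by
  obtain ⟨x, hx, hxU⟩ := hs.exists_mem_open hU hU'
  obtain ⟨y, ⟨z, hzy, hz⟩, hyV⟩ := hu.exists_mem_open hV hV'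
  have h₁ : Tendsto (fun n => x + z n) atTop (𝓝 x) := by
    simpa using tendsto_const_nhds.add hz
  have h₂ : Tendsto (fun n => (T ^ n) (x + z n)) atTop (𝓝 y) := by
    simpa only [map_add, hzy, zero_add] using hx.add (tendsto_const_nhds (x := y))
  obtain ⟨n, hn⟩ := ((h₁.eventually (hU.mem_nhds hxU)).and (h₂.eventually (hV.mem_nhds hyV))).exists
  exact ⟨n, x + z n, hn⟩

end ContinuousLinearMap

variable {ι : Type*} [ContinuousAdd X] [ContinuousConstSMul R X] {T : X →L[R] X}
  {e : ι → ℕ → X}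

theorem span_le_stableSubmodule (he : ∀ i, IsJordanChain T (e i)) :
    Submodule.span R (range (uncurry e)) ≤ T.stableSubmodule := by
  refine Submodule.span_le.mpr ?_
  rintro _ ⟨⟨i, m⟩, rfl⟩
  exact tendsto_const_nhds.congr'
    (eventually_atTop.mpr ⟨m + 1, fun n hn => ((he i).pow_apply_of_lt hn).symm⟩)

theorem span_le_vanishingPreimageSubmodule (he : ∀ i, IsJordanChain T (e i))
    (hlim : ∀ i, Tendsto (e i) atTop (𝓝 0)) :
    Submodule.span R (range (uncurry e)) ≤ T.vanishingPreimageSubmodule := by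
  refine Submodule.span_le.mpr ?_
  rintro _ ⟨⟨i, m⟩, rfl⟩
  exact ⟨fun n => e i (n + m), fun n => (he i).pow_apply_add n m,
    (hlim i).comp (tendsto_add_atTop_nat m)⟩

theorem exists_denseRange_pow_apply_of_isJordanChain [BaireSpace X] [SecondCountableTopology X]
    (he : ∀ i, IsJordanChain T (e i)) (hlim : ∀ i, Tendsto (e i) atTop (𝓝 0))
    (hdense : Dense (Submodule.span R (range (uncurry e)) : Set X)) :
    ∃ g, DenseRange fun n => (T ^ n) g :=
  exists_denseRange_of_forall_inter_preimage_nonempty (fun n => (T ^ n).continuous)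
    fun _ _ hU hU' hV hV' => exists_inter_preimage_pow_nonempty
      (hdense.mono (span_le_stableSubmodule he))
      (hdense.mono (span_le_vanishingPreimageSubmodule he hlim)) hU hU' hV hV'

end JordanChain

theorem Summable.exists_norm_tsum_comp_lt {X : Type*} [NormedAddCommGroup X] {f : ℕ → X}
    (hf : Summable f) {ε : ℝ} (hε : 0 < ε) :
    ∃ N, ∀ g : ℕ → ℕ, Injective g → (∀ j, N ≤ g j) → ‖∑' j, f (g j)‖ < ε := by
  obtain ⟨s, hs⟩ := hf.tsum_vanishing (ball_mem_nhds 0 hε)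
  refine ⟨s.sup id + 1, fun g hg hN => ?_⟩
  have hdisj : Disjoint (range g) s := by
    refine disjoint_left.mpr ?_
    rintro _ ⟨j, rfl⟩ hj
    have hle : g j ≤ s.sup id := Finset.le_sup (f := id) hj
    have := hN j
    omega
  simpa only [tsum_range f hg, mem_ball_zero_iff] using hs _ hdisj

section Periodic

variable {R X : Type*} [Semiring R] [NormedAddCommGroup X] [CompleteSpace X] [Module R X]
  {T : X →L[R] X}

theorem IsJordanChain.mem_closure_periodicSubmodule {e : ℕ → X} (h : IsJordanChain T e)
    (hs : Summable e) (n : ℕ) : e n ∈ closure (T.periodicSubmodule : Set X) := by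
  refine Metric.mem_closure_iff.mpr fun ε hε => ?_
  obtain ⟨N, hN⟩ := hs.exists_norm_tsum_comp_lt hε
  set k := n + N + 1
  have hinj : Injective fun j => n + j * k := fun a b hab => by simpa [k] using hab
  have hsum : Summable fun j => e (n + j * k) := hs.comp_injective hinj
  have htail : Summable fun j => e (n + (j + 1) * k) := (summable_nat_add_iff 1).mpr hsum
  set y := ∑' j, e (n + j * k)
  have hy : y = e n + ∑' j, e (n + (j + 1) * k) := by simpa using hsum.tsum_eq_zero_add
  refine ⟨y, ⟨k, by omega, ?_⟩, ?_⟩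
  · calc (T ^ k) y = ∑' j, (T ^ k) (e (n + (j + 1) * k)) := by
          rw [hy, map_add, h.pow_apply_of_lt (by omega), zero_add, (T ^ k).map_tsum htail]
      _ = y := by
          congr with j
          rw [show n + (j + 1) * k = k + (n + j * k) by ring, h.pow_apply_add]
  · rw [hy, dist_self_add_right]
    refine hN _ (hinj.comp (add_left_injective 1)) fun j => ?_
    have : k ≤ (j + 1) * k := Nat.le_mul_of_pos_left k j.succ_pos
    omega

theorem dense_periodicSubmodule_of_isJordanChain [ContinuousConstSMul R X] {ι : Type*}
    {e : ι → ℕ → X}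
    (he : ∀ i, IsJordanChain T (e i)) (hs : ∀ i, Summable (e i))
    (hdense : Dense (Submodule.span R (range (uncurry e)) : Set X)) :
    Dense (T.periodicSubmodule : Set X) := by
  have : Submodule.span R (range (uncurry e)) ≤ T.periodicSubmodule.topologicalClosure := by
    refine Submodule.span_le.mpr ?_
    rintro _ ⟨⟨i, m⟩, rfl⟩
    exact (he i).mem_closure_periodicSubmodule (hs i) m
  rw [← dense_closure, ← Submodule.topologicalClosure_coe]
  exact hdense.mono this

end Periodic

-- For `n = 0` the truncated `n - 1` is harmless: its coefficient vanishes.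
theorem iteratedDerivWithin_id_smul_zero {𝕜 F : Type*} [NontriviallyNormedField 𝕜]
    [NormedAddCommGroup F] [NormedSpace 𝕜 F] {s : Set 𝕜} {g : 𝕜 → F} {n : ℕ}
    (hs : UniqueDiffOn 𝕜 s) (h₀ : 0 ∈ s) (hg : ContDiffWithinAt 𝕜 n g s 0) :
    iteratedDerivWithin n (fun z => z • g z) s 0 = (n : 𝕜) • iteratedDerivWithin (n - 1) g s 0 := by
  rw [show (fun z => z • g z) = (fun z : 𝕜 => z) • g from rfl,
    iteratedDerivWithin_smul h₀ hs (f := fun z => z) contDiffWithinAt_id hg]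
  rcases n with _ | n
  · simp [iteratedDerivWithin_fun_id h₀ hs]
  · rw [Finset.sum_eq_single 1]
    · simp [iteratedDerivWithin_fun_id h₀ hs, ← Nat.cast_smul_eq_nsmul 𝕜]
    · intro i _ hi
      simp [iteratedDerivWithin_fun_id h₀ hs, hi]
    · simp

section ReproducingKernel

variable {H E : Type*} [NormedAddCommGroup H] [InnerProductSpace ℂ H] [CompleteSpace H]
  [NormedAddCommGroup E] [InnerProductSpace ℂ E]

theorem summable_of_fSummable_inner {v : ℕ → H} (h : FSummable fun n m => ⟪v m, v n⟫_ℂ) :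
    Summable v := by
  refine summable_iff_vanishing_norm.mpr fun ε hε => ?_
  obtain ⟨N, hN⟩ := h (ε ^ 2) (by positivity)
  refine ⟨Finset.range N, fun t ht => ?_⟩
  have hgram : ∑ n ∈ t, ∑ m ∈ t, ⟪v m, v n⟫_ℂ = ⟪∑ n ∈ t, v n, ∑ n ∈ t, v n⟫_ℂ := by
    rw [Finset.sum_comm, sum_inner]
    simp_rw [inner_sum]
  have := hN t fun n hn => by simpa using Finset.disjoint_left.mp ht hn
  rw [hgram, inner_self_eq_norm_sq_to_K, norm_pow, RCLike.norm_ofReal, abs_norm] at this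
  exact (pow_lt_pow_iff_left₀ (norm_nonneg _) hε.le two_ne_zero).mp this

theorem adjoint_apply_kernel [CompleteSpace E] {ι : H →ₗ[ℂ] (ℂ → E)}
    (hanal : ∀ f, DifferentiableOn ℂ (ι f) 𝔻) {Mz : H →L[ℂ] H}
    (hMz : ∀ f, ∀ w ∈ 𝔻, ι (Mz f) w = w • ι f w) {K : ℕ → E → H}
    (hK : ∀ n η f, ⟪f, K n η⟫_ℂ = ⟪iteratedDerivWithin n (ι f) 𝔻 0, η⟫_ℂ) (n : ℕ) (η : E) :
    adjoint Mz (K n η) = (n : ℂ) • K (n - 1) η := by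
  have h₀ : (0 : ℂ) ∈ 𝔻 := mem_ball_self one_pos
  refine ext_inner_left ℂ fun f => ?_
  rw [adjoint_inner_right, hK, iteratedDerivWithin_congr (hMz f) h₀,
    iteratedDerivWithin_id_smul_zero isOpen_ball.uniqueDiffOn h₀
      (((hanal f).contDiffOn isOpen_ball).contDiffWithinAt h₀),
    inner_smul_left, inner_smul_right, hK, Complex.conj_natCast]

theorem summable_inv_factorial_smul {v : ℕ → H}
    (h : FSummable fun n m => 1 / ((n ! : ℂ) * m !) * ⟪v m, v n⟫_ℂ) :
    Summable fun n => (n ! : ℂ)⁻¹ • v n := by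
  refine summable_of_fSummable_inner ?_
  convert h using 3 with n m
  rw [inner_smul_left, inner_smul_right, map_inv₀, Complex.conj_natCast]
  ring

theorem dense_span_kernel [CompleteSpace E] {ι : H →ₗ[ℂ] (ℂ → E)}
    (hinj : ∀ f g, EqOn (ι f) (ι g) 𝔻 → f = g) (hanal : ∀ f, DifferentiableOn ℂ (ι f) 𝔻)
    {K : ℕ → E → H}
    (hK : ∀ n η f, ⟪f, K n η⟫_ℂ = ⟪iteratedDerivWithin n (ι f) 𝔻 0, η⟫_ℂ) {E₀ : Set E}
    (hE₀ : Dense (Submodule.span ℂ E₀ : Set E)) :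
    Dense (Submodule.span ℂ {x | ∃ n, ∃ η ∈ E₀, K n η = x} : Set H) := by
  rw [Submodule.dense_iff_topologicalClosure_eq_top, Submodule.topologicalClosure_eq_top_iff,
    Submodule.eq_bot_iff]
  intro f hf
  have hderiv : ∀ n, iteratedDerivWithin n (ι f) 𝔻 0 = 0 := by
    intro n
    have hv : innerSL ℂ (iteratedDerivWithin n (ι f) 𝔻 0) = 0 :=
      ContinuousLinearMap.ext_on hE₀ fun η hη => by
        rw [innerSL_apply_apply, ← hK, zero_apply]
        exact Submodule.inner_left_of_mem_orthogonal
          (Submodule.subset_span (s := {x | ∃ n, ∃ η ∈ E₀, K n η = x}) ⟨n, η, hη, rfl⟩) hf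
    simpa using congr($hv (iteratedDerivWithin n (ι f) 𝔻 0))
  have htaylor := Complex.hasSum_taylorSeries_on_ball (hanal f)
  simp only [← iteratedDerivWithin_of_isOpen isOpen_ball (mem_ball_self one_pos), hderiv,
    smul_zero] at htaylor
  exact hinj f 0 fun z hz => by simpa using (htaylor hz).unique hasSum_zero

end ReproducingKernel

theorem stmt8_general {H E : Type*}
    [NormedAddCommGroup H] [InnerProductSpace ℂ H] [CompleteSpace H]
    [TopologicalSpace.SeparableSpace H]
    [NormedAddCommGroup E] [InnerProductSpace ℂ E] [CompleteSpace E]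
    (ι : H →ₗ[ℂ] (ℂ → E))
    (hinj : ∀ f g : H, Set.EqOn (ι f) (ι g) (ball (0 : ℂ) 1) → f = g)
    (hanal : ∀ f : H, DifferentiableOn ℂ (ι f) (ball (0 : ℂ) 1))
    (Mz : H →L[ℂ] H)
    (hMz : ∀ f : H, ∀ w ∈ ball (0 : ℂ) 1, ι (Mz f) w = w • ι f w)
    (K : ℕ → E → H)
    (hK : ∀ (n : ℕ) (η : E) (f : H),
      (inner ℂ f (K n η) : ℂ) =
        (inner ℂ (iteratedDerivWithin n (ι f) (ball (0 : ℂ) 1) 0) η : ℂ))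
    (E₀ : Set E)
    (hE₀ : Dense ((Submodule.span ℂ E₀ : Submodule ℂ E) : Set E))
    (hsum : ∀ η ∈ E₀, FSummable (fun n m : ℕ =>
      (1 / ((n.factorial : ℂ) * (m.factorial : ℂ))) * (inner ℂ (K m η) (K n η) : ℂ))) :
    (∃ g : H, Dense (Set.range fun m : ℕ => ((adjoint Mz) ^ m) g)) ∧
      Dense {y : H | ∃ k : ℕ, 1 ≤ k ∧ ((adjoint Mz) ^ k) y = y} := by
  let e : E₀ → ℕ → H := fun η n => (n ! : ℂ)⁻¹ • K n η
  have hchain : ∀ η, IsJordanChain (adjoint Mz) (e η) := fun η =>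
    isJordanChain_inv_factorial_smul (adjoint_apply_kernel hanal hMz hK · η)
  have hsummable : ∀ η, Summable (e η) := fun η => summable_inv_factorial_smul (hsum η η.2)
  have hdense : Dense (Submodule.span ℂ (range (uncurry e)) : Set H) := by
    refine (dense_span_kernel hinj hanal hK hE₀).mono (Submodule.span_le.mpr ?_)
    rintro _ ⟨n, η, hη, rfl⟩
    have hK_eq : K n η = (n ! : ℂ) • e ⟨η, hη⟩ n := by
      simp [e, smul_smul, Nat.factorial_ne_zero]
    rw [SetLike.mem_coe, hK_eq]
    exact Submodule.smul_mem _ _ (Submodule.subset_span ⟨(⟨η, hη⟩, n), rfl⟩)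
  have := UniformSpace.secondCountable_of_separable H
  exact ⟨exists_denseRange_pow_apply_of_isJordanChain hchain
      (fun η => (hsummable η).tendsto_atTop_zero) hdense,
    dense_periodicSubmodule_of_isJordanChain hchain hsummable hdense⟩

/-- Theorem (chaos): Let `H` be a separable analytic reproducing kernel Hilbert space of
`E`-valued functions on the unit disc on which `M_z` is bounded, and let `E₀ ⊆ E` have
dense linear span. If for every `η ∈ E₀` the family
`c_{n,m} = (1/(n!·m!)) ⟨K_{m,η}, K_{n,η}⟩` is `F`-summable, then `M_z*` is chaotic:
hypercyclic with a dense set of periodic points. -/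
theorem stmt8 {H E : Type*}
    [NormedAddCommGroup H] [InnerProductSpace ℂ H] [CompleteSpace H]
    [TopologicalSpace.SeparableSpace H]
    [NormedAddCommGroup E] [InnerProductSpace ℂ E] [CompleteSpace E]
    (ι : H →ₗ[ℂ] (ℂ → E))
    (hinj : ∀ f g : H, Set.EqOn (ι f) (ι g) (ball (0 : ℂ) 1) → f = g)
    (hanal : ∀ f : H, DifferentiableOn ℂ (ι f) (ball (0 : ℂ) 1))
    (heval : ∀ w ∈ ball (0 : ℂ) 1, Continuous fun f : H => ι f w)
    (Mz : H →L[ℂ] H)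
    (hMz : ∀ f : H, ∀ w ∈ ball (0 : ℂ) 1, ι (Mz f) w = w • ι f w)
    (K : ℕ → E → H)
    (hK : ∀ (n : ℕ) (η : E) (f : H),
      (inner ℂ f (K n η) : ℂ) =
        (inner ℂ (iteratedDerivWithin n (ι f) (ball (0 : ℂ) 1) 0) η : ℂ))
    (E₀ : Set E)
    (hE₀ : Dense ((Submodule.span ℂ E₀ : Submodule ℂ E) : Set E))
    (hsum : ∀ η ∈ E₀, FSummable (fun n m : ℕ =>
      (1 / ((n.factorial : ℂ) * (m.factorial : ℂ))) * (inner ℂ (K m η) (K n η) : ℂ))) :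
    (∃ g : H, Dense (Set.range fun m : ℕ => ((adjoint Mz) ^ m) g)) ∧
      Dense {y : H | ∃ k : ℕ, 1 ≤ k ∧ ((adjoint Mz) ^ k) y = y} :=
  stmt8_general ι hinj hanal Mz hMz K hK E₀ hE₀ hsum
end

section
/- In the tridiagonal setting, for all a, b ∈ ℂ and every n ∈ ℕ, the function z ↦ a zⁿ + b z^{n+1} belongs to H and ‖a zⁿ + b z^{n+1}‖²_H ≤ C/|μ_n|², where M := max(|a|, |b|) and C := M²·(1 + (r+1)²/(1 − R²)). -/
/-!
Solving the triangular system for the coefficients `c_k` of `a zⁿ + b z^{n+1}` in the basis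
`e_{n+k}` gives `|c₀| ≤ M/|μₙ|`, `|c₁| ≤ M(r+1)/|μₙ|` and `|c_{k+2}| ≤ R |c_{k+1}|`, so
`∑ |c_k|² ≤ C/|μₙ|²` and `g = ∑ c_k e_{n+k}` converges in `H`. Since point evaluations are
continuous, the partial sums of `g(w)` differ from `a wⁿ + b w^{n+1}` by a single monomial
`c_K ν_{n+K} w^{n+K+1}`. These monomials converge at every point of the disc, hence are bounded at
points closer to the boundary, and therefore tend to `0`.
-/

open Metric Filter Topology Finset

theorem tendsto_mul_pow_nhds_zero_of_norm_lt {𝕜 : Type*} [NormedField 𝕜] {α : ℕ → 𝕜}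
    {m : ℕ → ℕ} (hm : Tendsto m atTop atTop) {z w : 𝕜} (hzw : ‖z‖ < ‖w‖)
    (hbdd : IsBoundedUnder (· ≤ ·) atTop fun k => ‖α k * w ^ m k‖) :
    Tendsto (fun k => α k * z ^ m k) atTop (𝓝 0) := by
  have hw : w ≠ 0 := norm_pos_iff.mp ((norm_nonneg z).trans_lt hzw)
  have hq : Tendsto (fun k => (z / w) ^ m k) atTop (𝓝 0) := by
    refine (tendsto_pow_atTop_nhds_zero_of_norm_lt_one ?_).comp hm
    rwa [norm_div, div_lt_one (norm_pos_iff.mpr hw)]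
  refine (hq.zero_mul_isBoundedUnder_le hbdd).congr fun k => ?_
  rw [div_pow]
  field_simp

theorem tendsto_mul_pow_nhds_zero_of_forall_mem_ball {α : ℕ → ℂ} {m : ℕ → ℕ}
    (hm : Tendsto m atTop atTop)
    (h : ∀ w ∈ ball (0 : ℂ) 1, ∃ L, Tendsto (fun k => α k * w ^ m k) atTop (𝓝 L))
    {z : ℂ} (hz : z ∈ ball (0 : ℂ) 1) :
    Tendsto (fun k => α k * z ^ m k) atTop (𝓝 0) := by
  rw [mem_ball_zero_iff] at hz
  set w : ℂ := (((1 + ‖z‖) / 2 : ℝ) : ℂ)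
  have hw : ‖w‖ = (1 + ‖z‖) / 2 := by
    rw [Complex.norm_real, Real.norm_of_nonneg (by positivity)]
  obtain ⟨L, hL⟩ := h w (by rw [mem_ball_zero_iff, hw]; linarith)
  exact tendsto_mul_pow_nhds_zero_of_norm_lt hm (by rw [hw]; linarith) hL.norm.isBoundedUnder_le

section GeometricBound

variable {E : Type*} [SeminormedAddCommGroup E] {x : ℕ → E} {A D R : ℝ}

theorem summable_norm_sq_of_le_geometric (hR0 : 0 ≤ R) (hR1 : R < 1)
    (hx : ∀ k, ‖x (k + 1)‖ ≤ R ^ k * D) : Summable fun k => ‖x k‖ ^ 2 := by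
  refine (summable_nat_add_iff 1).mp <|
    ((summable_geometric_of_lt_one (by positivity) (pow_lt_one₀ hR0 hR1 two_ne_zero)).mul_left
      (D ^ 2)).of_nonneg_of_le (fun k => sq_nonneg _) fun k => ?_
  calc ‖x (k + 1)‖ ^ 2 ≤ (R ^ k * D) ^ 2 := pow_le_pow_left₀ (norm_nonneg _) (hx k) 2
    _ = D ^ 2 * (R ^ 2) ^ k := by ring

theorem tsum_norm_sq_le_of_le_geometric (hR0 : 0 ≤ R) (hR1 : R < 1) (hx0 : ‖x 0‖ ≤ A)
    (hx : ∀ k, ‖x (k + 1)‖ ≤ R ^ k * D) :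
    ∑' k, ‖x k‖ ^ 2 ≤ A ^ 2 + D ^ 2 / (1 - R ^ 2) := by
  have hR2 : R ^ 2 < 1 := pow_lt_one₀ hR0 hR1 two_ne_zero
  have hgeom : HasSum (fun k => D ^ 2 * (R ^ 2) ^ k) (D ^ 2 / (1 - R ^ 2)) := by
    simpa [div_eq_mul_inv] using (hasSum_geometric_of_lt_one (by positivity) hR2).mul_left (D ^ 2)
  rw [(summable_norm_sq_of_le_geometric hR0 hR1 hx).tsum_eq_zero_add]
  refine add_le_add (pow_le_pow_left₀ (norm_nonneg _) hx0 2) ?_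
  refine hgeom.tsum_eq ▸ ((summable_nat_add_iff 1).mpr
      (summable_norm_sq_of_le_geometric hR0 hR1 hx)).tsum_le_tsum (fun k => ?_) hgeom.summable
  calc ‖x (k + 1)‖ ^ 2 ≤ (R ^ k * D) ^ 2 := pow_le_pow_left₀ (norm_nonneg _) (hx k) 2
    _ = D ^ 2 * (R ^ 2) ^ k := by ring

end GeometricBound

section Orthonormal

variable {ι 𝕜 E : Type*} [RCLike 𝕜] [NormedAddCommGroup E] [InnerProductSpace 𝕜 E]
  [CompleteSpace E] {v : ι → E} {c : ι → 𝕜}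

theorem Orthonormal.summable_smul (hv : Orthonormal 𝕜 v) (hc : Summable fun i => ‖c i‖ ^ 2) :
    Summable fun i => c i • v i :=
  (hv.orthogonalFamily.summable_iff_norm_sq_summable c).2 hc

theorem Orthonormal.norm_tsum_smul_sq (hv : Orthonormal 𝕜 v) (hc : Summable fun i => ‖c i‖ ^ 2) :
    ‖∑' i, c i • v i‖ ^ 2 = ∑' i, ‖c i‖ ^ 2 := by
  refine (HasSum.tsum_eq ?_).symm
  exact (((continuous_norm.pow 2).tendsto _).comp (hv.summable_smul hc).hasSum).congr
    fun s => hv.orthogonalFamily.norm_sum c s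

end Orthonormal

section TridiagonalCoefficients

variable (μ ν : ℕ → ℂ) (a b : ℂ) (n : ℕ)

/-- The coefficients of `a zⁿ + b z^{n+1}` in the basis `e_{n+k}`, solving the triangular
system `c₀ μₙ = a`, `c₁ μₙ₊₁ + c₀ νₙ = b`, `c_{k+1} μ_{n+k+1} + c_k ν_{n+k} = 0` for `k ≥ 1`. -/
noncomputable def tridiagCoeff : ℕ → ℂ
  | 0 => a / μ n
  | 1 => b / μ (n + 1) - a / μ n * (ν n / μ (n + 1))
  | k + 2 => -(tridiagCoeff (k + 1) * (ν (n + k + 1) / μ (n + k + 2)))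

variable {μ ν a b n}

theorem sum_tridiagCoeff_mul (hμ : ∀ m, μ m ≠ 0) (w : ℂ) (K : ℕ) :
    ∑ k ∈ range (K + 2),
        tridiagCoeff μ ν a b n k * (μ (n + k) * w ^ (n + k) + ν (n + k) * w ^ (n + k + 1)) =
      a * w ^ n + b * w ^ (n + 1) +
        tridiagCoeff μ ν a b n (K + 1) * ν (n + K + 1) * w ^ (n + K + 2) := by
  induction K with
  | zero =>
    simp only [sum_range_succ, range_zero, sum_empty, tridiagCoeff, add_zero]
    field_simp [hμ n, hμ (n + 1)]
    ring
  | succ K ih =>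
    rw [sum_range_succ, ih, tridiagCoeff]
    simp only [← add_assoc]
    field_simp [hμ (n + K + 2)]
    ring

theorem norm_tridiagCoeff_zero_le : ‖tridiagCoeff μ ν a b n 0‖ ≤ max ‖a‖ ‖b‖ / ‖μ n‖ := by
  rw [tridiagCoeff, norm_div]
  gcongr
  exact le_max_left _ _

theorem norm_tridiagCoeff_succ_le {r R : ℝ} (hμ : μ n ≠ 0) (hr : ‖μ n / μ (n + 1)‖ ≤ r)
    (hR : ∀ m, ‖ν m / μ (m + 1)‖ ≤ R) (hR1 : R ≤ 1) (k : ℕ) :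
    ‖tridiagCoeff μ ν a b n (k + 1)‖ ≤ R ^ k * (max ‖a‖ ‖b‖ * (r + 1) / ‖μ n‖) := by
  induction k with
  | zero =>
    have hb : b / μ (n + 1) = b / μ n * (μ n / μ (n + 1)) := by field_simp
    have hbn : ‖b / μ n‖ ≤ max ‖a‖ ‖b‖ / ‖μ n‖ := by
      rw [norm_div]
      gcongr
      exact le_max_right _ _
    calc ‖tridiagCoeff μ ν a b n 1‖
        = ‖b / μ n * (μ n / μ (n + 1)) - a / μ n * (ν n / μ (n + 1))‖ := by rw [tridiagCoeff, hb]
      _ ≤ ‖b / μ n‖ * ‖μ n / μ (n + 1)‖ + ‖a / μ n‖ * ‖ν n / μ (n + 1)‖ := by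
          rw [← norm_mul, ← norm_mul]
          exact norm_sub_le _ _
      _ ≤ max ‖a‖ ‖b‖ / ‖μ n‖ * r + max ‖a‖ ‖b‖ / ‖μ n‖ * 1 := by
          gcongr
          · exact norm_tridiagCoeff_zero_le (ν := ν) (b := b)
          · exact (hR n).trans hR1
      _ = R ^ 0 * (max ‖a‖ ‖b‖ * (r + 1) / ‖μ n‖) := by ring
  | succ k ih =>
    calc ‖tridiagCoeff μ ν a b n (k + 2)‖
        = ‖tridiagCoeff μ ν a b n (k + 1)‖ * ‖ν (n + k + 1) / μ (n + k + 1 + 1)‖ := by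
          rw [tridiagCoeff, norm_neg, norm_mul]
      _ ≤ R ^ k * (max ‖a‖ ‖b‖ * (r + 1) / ‖μ n‖) * R :=
          mul_le_mul ih (hR _) (norm_nonneg _) ((norm_nonneg _).trans ih)
      _ = _ := by ring

theorem eq_of_forall_hasSum_tridiagCoeff_mul (hμ : ∀ m, μ m ≠ 0) {F : ℂ → ℂ}
    (hF : ∀ w ∈ ball (0 : ℂ) 1, HasSum (fun k =>
      tridiagCoeff μ ν a b n k * (μ (n + k) * w ^ (n + k) + ν (n + k) * w ^ (n + k + 1))) (F w))
    {w : ℂ} (hw : w ∈ ball (0 : ℂ) 1) : F w = a * w ^ n + b * w ^ (n + 1) := by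
  have htail : ∀ w ∈ ball (0 : ℂ) 1, Tendsto
      (fun K => tridiagCoeff μ ν a b n (K + 1) * ν (n + K + 1) * w ^ (n + K + 2)) atTop
      (𝓝 (F w - (a * w ^ n + b * w ^ (n + 1)))) := by
    intro w hw
    refine (((hF w hw).tendsto_sum_nat.comp (tendsto_add_atTop_nat 2)).sub_const _).congr
      fun K => ?_
    rw [Function.comp_apply, sum_tridiagCoeff_mul hμ, add_sub_cancel_left]
  have hvanish := tendsto_mul_pow_nhds_zero_of_forall_mem_ball
    (tendsto_atTop_mono (fun K => show K ≤ n + K + 2 by omega) tendsto_id)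
    (fun w hw => ⟨_, htail w hw⟩) hw
  exact sub_eq_zero.mp (tendsto_nhds_unique (htail w hw) hvanish)

end TridiagonalCoefficients

theorem stmt12_general {H : Type*}
    [NormedAddCommGroup H] [InnerProductSpace ℂ H] [CompleteSpace H]
    (ι : H →ₗ[ℂ] (ℂ → ℂ))
    (heval : ∀ w ∈ ball (0 : ℂ) 1, Continuous fun f : H => ι f w)
    (μ ν : ℕ → ℂ) (hμ : ∀ n, μ n ≠ 0)
    (r R : ℝ)
    (hr : ∀ n, ‖μ n / μ (n + 1)‖ ≤ r)
    (hR : ∀ n, ‖ν n / μ (n + 1)‖ ≤ R)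
    (hR1 : R < 1)
    (e : ℕ → H)
    (he : ∀ n, ∀ w ∈ ball (0 : ℂ) 1, ι (e n) w = μ n * w ^ n + ν n * w ^ (n + 1))
    (hON : Orthonormal ℂ e) :
    ∀ (a b : ℂ) (n : ℕ), ∃ g : H,
      (∀ w ∈ ball (0 : ℂ) 1, ι g w = a * w ^ n + b * w ^ (n + 1)) ∧
      ‖g‖ ^ 2 ≤ (max ‖a‖ ‖b‖) ^ 2 *
        (1 + (r + 1) ^ 2 / (1 - R ^ 2)) / ‖μ n‖ ^ 2 := by
  intro a b n
  set c := tridiagCoeff μ ν a b n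
  have hR0 : 0 ≤ R := (norm_nonneg _).trans (hR 0)
  have hc0 : ‖c 0‖ ≤ max ‖a‖ ‖b‖ / ‖μ n‖ := norm_tridiagCoeff_zero_le
  have hc := norm_tridiagCoeff_succ_le (a := a) (b := b) (hμ n) (hr n) hR hR1.le
  have hsq : Summable fun k => ‖c k‖ ^ 2 := summable_norm_sq_of_le_geometric hR0 hR1 hc
  have hON' : Orthonormal ℂ fun k => e (n + k) := hON.comp _ (add_right_injective n)
  refine ⟨∑' k, c k • e (n + k), fun z hz => eq_of_forall_hasSum_tridiagCoeff_mul (ν := ν) hμ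
    (fun w hw => ?_) hz, ?_⟩
  · have hsum := ((hON'.summable_smul hsq).hasSum.map ((LinearMap.proj w).comp ι) (heval w hw))
    refine hsum.congr_fun fun k => ?_
    simp [he _ w hw, c]
  · rw [hON'.norm_tsum_smul_sq hsq]
    calc ∑' k, ‖c k‖ ^ 2
        ≤ (max ‖a‖ ‖b‖ / ‖μ n‖) ^ 2 + (max ‖a‖ ‖b‖ * (r + 1) / ‖μ n‖) ^ 2 / (1 - R ^ 2) :=
          tsum_norm_sq_le_of_le_geometric hR0 hR1 hc0 hc
      _ = _ := by ring

/-- Tridiagonal setting: `H` is an analytic reproducing kernel Hilbert space of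
complex-valued functions on the unit disc in which `e_n(z) = μ_n zⁿ + ν_n z^{n+1}` is an
orthonormal basis, `r ≥ sup |μ_n/μ_{n+1}|` and `R ≥ sup |ν_n/μ_{n+1}|` with `R < 1`.
Then for all `a, b ∈ ℂ` and `n ∈ ℕ` the function `z ↦ a zⁿ + b z^{n+1}` belongs to `H`
and its squared norm is at most `C/|μ_n|²`, where `M = max(|a|,|b|)` and
`C = M²(1 + (r+1)²/(1-R²))`. -/
theorem stmt12 {H : Type*}
    [NormedAddCommGroup H] [InnerProductSpace ℂ H] [CompleteSpace H]
    (ι : H →ₗ[ℂ] (ℂ → ℂ))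
    (hinj : ∀ f g : H, Set.EqOn (ι f) (ι g) (ball (0 : ℂ) 1) → f = g)
    (hanal : ∀ f : H, DifferentiableOn ℂ (ι f) (ball (0 : ℂ) 1))
    (heval : ∀ w ∈ ball (0 : ℂ) 1, Continuous fun f : H => ι f w)
    (μ ν : ℕ → ℂ) (hμ : ∀ n, μ n ≠ 0) (hν : ∀ n, ν n ≠ 0)
    (r R : ℝ)
    (hr : ∀ n, ‖μ n / μ (n + 1)‖ ≤ r)
    (hR : ∀ n, ‖ν n / μ (n + 1)‖ ≤ R)
    (hR1 : R < 1)
    (e : ℕ → H)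
    (he : ∀ n, ∀ w ∈ ball (0 : ℂ) 1, ι (e n) w = μ n * w ^ n + ν n * w ^ (n + 1))
    (hON : Orthonormal ℂ e)
    (htotal : Dense ((Submodule.span ℂ (Set.range e) : Submodule ℂ H) : Set H)) :
    ∀ (a b : ℂ) (n : ℕ), ∃ g : H,
      (∀ w ∈ ball (0 : ℂ) 1, ι g w = a * w ^ n + b * w ^ (n + 1)) ∧
      ‖g‖ ^ 2 ≤ (max ‖a‖ ‖b‖) ^ 2 *
        (1 + (r + 1) ^ 2 / (1 - R ^ 2)) / ‖μ n‖ ^ 2 :=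
  stmt12_general ι heval μ ν hμ r R hr hR hR1 e he hON
end

section
/- In the tridiagonal setting, suppose in addition that the multiplication operator M_z is bounded on H. If M_z* is hypercyclic on H, then liminf_n |μ_n| = 0. -/
/-!
If `|μ n| ≥ δ > 0` for all large `n`, the monomials are uniformly bounded in `H` from some
index on: solving `e n = μ n zⁿ + ν n zⁿ⁺¹` for `zⁿ` recursively gives
`zⁿ = ∑ⱼ cⱼ e (n + j)` with `|cⱼ| ≤ Rʲ / |μ n|`. Hence the `M_z`-orbit of `e 0 = μ 0 + ν 0 z`
is eventually bounded, so `m ↦ ⟪e 0, (M_z*)ᵐ g⟫ = ⟪M_zᵐ (e 0), g⟫` is bounded for every `g`,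
and no orbit of `M_z*` can be dense.
-/

open Metric Filter ContinuousLinearMap Finset Topology

theorem exists_pos_eventually_le_of_liminf_ne_zero {α : Type*} {f : Filter α} {u : α → ℝ}
    (hu : ∀ x, 0 ≤ u x) (h : liminf (fun x => (u x : EReal)) f ≠ 0) :
    ∃ δ > 0, ∀ᶠ x in f, δ ≤ u x := by
  have hpos : 0 < liminf (fun x => (u x : EReal)) f :=
    (le_liminf_of_le (by isBoundedDefault)
      (Eventually.of_forall fun x => EReal.coe_nonneg.2 (hu x))).lt_of_ne' h
  obtain ⟨δ, hδ0, hδ⟩ := EReal.lt_iff_exists_real_btwn.1 hpos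
  exact ⟨δ, EReal.coe_pos.1 hδ0,
    (eventually_lt_of_lt_liminf hδ).mono fun x hx => (EReal.coe_lt_coe_iff.1 hx).le⟩

theorem not_isBoundedUnder_norm_comp_of_denseRange {𝕜 E : Type*} [NontriviallyNormedField 𝕜]
    [NormedAddCommGroup E] [NormedSpace 𝕜 E] {u : ℕ → E} (hu : DenseRange u)
    {φ : E →L[𝕜] 𝕜} (hφ : φ ≠ 0) :
    ¬ IsBoundedUnder (· ≤ ·) atTop fun m => ‖φ (u m)‖ := by
  intro hbdd
  obtain ⟨C, hC⟩ := hbdd.bddAbove_range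
  have hdense : DenseRange (φ ∘ u) :=
    (LinearMap.surjective (f := φ.toLinearMap) (by exact_mod_cast hφ)).denseRange.comp hu
      φ.continuous
  apply NormedSpace.unbounded_univ 𝕜 𝕜
  rw [← hdense.closure_range]
  exact (isBounded_iff_forall_norm_le.2
    ⟨C, Set.forall_mem_range.2 fun m => hC (Set.mem_range_self m)⟩).closure

theorem not_denseRange_adjoint_pow_orbit {𝕜 H : Type*} [RCLike 𝕜] [NormedAddCommGroup H]
    [InnerProductSpace 𝕜 H] [CompleteSpace H] {T : H →L[𝕜] H} {x : H} (hx : x ≠ 0)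
    (hT : IsBoundedUnder (· ≤ ·) atTop fun m => ‖(T ^ m) x‖) (g : H) :
    ¬ DenseRange fun m => (adjoint T ^ m) g := by
  intro hg
  refine not_isBoundedUnder_norm_comp_of_denseRange hg (φ := innerSL 𝕜 x) ?_ ?_
  · rw [← norm_ne_zero_iff, innerSL_apply_norm]
    exact norm_ne_zero_iff.2 hx
  obtain ⟨C, hC⟩ := hT
  refine isBoundedUnder_of_eventually_le (a := C * ‖g‖) ?_
  filter_upwards [hC] with m hm
  rw [innerSL_apply_apply, ← star_eq_adjoint, ← star_pow, star_eq_adjoint, adjoint_inner_right]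
  exact (norm_inner_le_norm _ _).trans (mul_le_mul_of_nonneg_right hm (norm_nonneg g))

theorem tendsto_mul_pow_nhds_zero_of_forall_tendsto {a : ℕ → ℂ} {k : ℕ → ℕ}
    (hk : Tendsto k atTop atTop)
    (h : ∀ w ∈ ball (0 : ℂ) 1, ∃ l, Tendsto (fun K => a K * w ^ k K) atTop (𝓝 l))
    {w : ℂ} (hw : w ∈ ball (0 : ℂ) 1) :
    Tendsto (fun K => a K * w ^ k K) atTop (𝓝 0) := by
  obtain ⟨ρ, hwρ, hρ1⟩ := exists_between (mem_ball_zero_iff.1 hw)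
  have hρ0 : 0 < ρ := (norm_nonneg w).trans_lt hwρ
  obtain ⟨l, hl⟩ := h ρ (by simpa [abs_of_pos hρ0] using hρ1)
  obtain ⟨M, hM⟩ := hl.norm.isBoundedUnder_le
  set q := ‖w‖ / ρ
  have hq : q < 1 := (div_lt_one hρ0).2 hwρ
  have hlim : Tendsto (fun K => M * q ^ k K) atTop (𝓝 0) := by
    simpa using ((tendsto_pow_atTop_nhds_zero_of_lt_one (by positivity) hq).comp hk).const_mul M
  refine squeeze_zero_norm' ?_ hlim
  filter_upwards [eventually_map.1 hM] with K hK
  calc ‖a K * w ^ k K‖ = ‖a K * (ρ : ℂ) ^ k K‖ * q ^ k K := by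
        simp only [norm_mul, norm_pow, Complex.norm_real, Real.norm_of_nonneg hρ0.le, q, div_pow]
        field_simp
    _ ≤ M * q ^ k K := by gcongr

noncomputable def monomialCoeff (μ ν : ℕ → ℂ) (n j : ℕ) : ℂ :=
  (μ n)⁻¹ * ∏ i ∈ range j, -(ν (n + i) / μ (n + i + 1))

theorem monomialCoeff_succ (μ ν : ℕ → ℂ) (n j : ℕ) :
    monomialCoeff μ ν n (j + 1) = monomialCoeff μ ν n j * -(ν (n + j) / μ (n + j + 1)) := by
  simp only [monomialCoeff, prod_range_succ, mul_assoc]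

theorem norm_monomialCoeff_le {μ ν : ℕ → ℂ} {R : ℝ} (hR : ∀ n, ‖ν n / μ (n + 1)‖ ≤ R)
    (n j : ℕ) : ‖monomialCoeff μ ν n j‖ ≤ ‖μ n‖⁻¹ * R ^ j := by
  rw [monomialCoeff, norm_mul, norm_inv, norm_prod]
  gcongr
  calc ∏ i ∈ range j, ‖-(ν (n + i) / μ (n + i + 1))‖ ≤ ∏ _i ∈ range j, R :=
        prod_le_prod (fun _ _ => norm_nonneg _) fun i _ => (norm_neg _).trans_le (hR _)
    _ = R ^ j := by rw [prod_const, card_range]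

section Tridiagonal

variable {H : Type*} [NormedAddCommGroup H] [NormedSpace ℂ H]
  (ι : H →ₗ[ℂ] (ℂ → ℂ)) (μ ν : ℕ → ℂ) (e : ℕ → H)

/-- The monomial `zⁿ` as an element of `H`, expanded in the basis `e` (see `apply_monomial`). -/
noncomputable def monomial (n : ℕ) : H :=
  ∑' j, monomialCoeff μ ν n j • e (n + j)

variable {ι μ ν e}

theorem apply_monomialCoeff_smul (hμ : ∀ n, μ n ≠ 0)
    (he : ∀ n, ∀ w ∈ ball (0 : ℂ) 1, ι (e n) w = μ n * w ^ n + ν n * w ^ (n + 1))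
    (n j : ℕ) {w : ℂ} (hw : w ∈ ball (0 : ℂ) 1) :
    ι (monomialCoeff μ ν n j • e (n + j)) w =
      monomialCoeff μ ν n j * μ (n + j) * w ^ (n + j)
        - monomialCoeff μ ν n (j + 1) * μ (n + (j + 1)) * w ^ (n + (j + 1)) := by
  rw [map_smul, Pi.smul_apply, smul_eq_mul, he _ w hw, monomialCoeff_succ, ← add_assoc]
  field_simp [hμ (n + j + 1)]
  ring

variable {R : ℝ}

theorem hasSum_monomial [CompleteSpace H] (hR : ∀ n, ‖ν n / μ (n + 1)‖ ≤ R) (hR1 : R < 1)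
    (he : ∀ n, ‖e n‖ = 1) (n : ℕ) :
    HasSum (fun j => monomialCoeff μ ν n j • e (n + j)) (monomial μ ν e n) := by
  have hR0 : 0 ≤ R := (norm_nonneg _).trans (hR 0)
  refine (Summable.of_norm_bounded ((summable_geometric_of_lt_one hR0 hR1).mul_left ‖μ n‖⁻¹)
    fun j => ?_).hasSum
  rw [norm_smul, he, mul_one]
  exact norm_monomialCoeff_le hR n j

theorem norm_monomial_le (hR : ∀ n, ‖ν n / μ (n + 1)‖ ≤ R) (hR1 : R < 1)
    (he : ∀ n, ‖e n‖ = 1) (n : ℕ) :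
    ‖monomial μ ν e n‖ ≤ ‖μ n‖⁻¹ * (1 - R)⁻¹ := by
  have hR0 : 0 ≤ R := (norm_nonneg _).trans (hR 0)
  refine tsum_of_norm_bounded ((hasSum_geometric_of_lt_one hR0 hR1).mul_left ‖μ n‖⁻¹)
    fun j => ?_
  rw [norm_smul, he, mul_one]
  exact norm_monomialCoeff_le hR n j

theorem apply_monomial [CompleteSpace H]
    (heval : ∀ w ∈ ball (0 : ℂ) 1, Continuous fun f : H => ι f w)
    (hμ : ∀ n, μ n ≠ 0) (hR : ∀ n, ‖ν n / μ (n + 1)‖ ≤ R) (hR1 : R < 1)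
    (hnorm : ∀ n, ‖e n‖ = 1)
    (he : ∀ n, ∀ w ∈ ball (0 : ℂ) 1, ι (e n) w = μ n * w ^ n + ν n * w ^ (n + 1))
    (n : ℕ) {w : ℂ} (hw : w ∈ ball (0 : ℂ) 1) :
    ι (monomial μ ν e n) w = w ^ n := by
  set a := fun K => monomialCoeff μ ν n K * μ (n + K)
  have htail : ∀ z ∈ ball (0 : ℂ) 1,
      Tendsto (fun K => a K * z ^ (n + K)) atTop (𝓝 (z ^ n - ι (monomial μ ν e n) z)) := by
    intro z hz
    let ev : H →L[ℂ] ℂ := ⟨(LinearMap.proj z).comp ι, heval z hz⟩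
    have hsum : Tendsto (fun K => ∑ j ∈ range K, ι (monomialCoeff μ ν n j • e (n + j)) z)
        atTop (𝓝 (ι (monomial μ ν e n) z)) :=
      (ev.hasSum (hasSum_monomial hR hR1 hnorm n)).tendsto_sum_nat
    have hpartial : ∀ K, ∑ j ∈ range K, ι (monomialCoeff μ ν n j • e (n + j)) z
        = z ^ n - a K * z ^ (n + K) := fun K => by
      have ha0 : a 0 * z ^ (n + 0) = z ^ n := by simp [a, monomialCoeff, hμ n]
      simp_rw [apply_monomialCoeff_smul hμ he n _ hz, ← ha0]
      exact sum_range_sub' (fun j => a j * z ^ (n + j)) K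
    simp_rw [hpartial] at hsum
    simpa only [sub_sub_cancel] using hsum.const_sub (z ^ n)
  have hk : Tendsto (fun K => n + K) atTop atTop :=
    tendsto_atTop_mono (fun K => Nat.le_add_left K n) tendsto_id
  exact (sub_eq_zero.1 (tendsto_nhds_unique (htail w hw)
    (tendsto_mul_pow_nhds_zero_of_forall_tendsto hk (fun w hw => ⟨_, htail w hw⟩) hw))).symm

end Tridiagonal

section Multiplication

variable {H : Type*} [NormedAddCommGroup H] [NormedSpace ℂ H] {ι : H →ₗ[ℂ] (ℂ → ℂ)}
  {Mz : H →L[ℂ] H}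

theorem apply_pow_apply_eq_pow_mul (hMz : ∀ f : H, ∀ w ∈ ball (0 : ℂ) 1, ι (Mz f) w = w * ι f w)
    (m : ℕ) (f : H) {w : ℂ} (hw : w ∈ ball (0 : ℂ) 1) : ι ((Mz ^ m) f) w = w ^ m * ι f w := by
  induction m generalizing f with
  | zero => simp
  | succ m ih => rw [pow_succ, mul_apply_eq_comp, ih, hMz f w hw, pow_succ, mul_assoc]

variable [CompleteSpace H] {μ ν : ℕ → ℂ} {e : ℕ → H} {R : ℝ}
  (hinj : ∀ f g : H, Set.EqOn (ι f) (ι g) (ball (0 : ℂ) 1) → f = g)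
  (heval : ∀ w ∈ ball (0 : ℂ) 1, Continuous fun f : H => ι f w)
  (hμ : ∀ n, μ n ≠ 0) (hR : ∀ n, ‖ν n / μ (n + 1)‖ ≤ R) (hR1 : R < 1)
  (hnorm : ∀ n, ‖e n‖ = 1)
  (he : ∀ n, ∀ w ∈ ball (0 : ℂ) 1, ι (e n) w = μ n * w ^ n + ν n * w ^ (n + 1))
  (hMz : ∀ f : H, ∀ w ∈ ball (0 : ℂ) 1, ι (Mz f) w = w * ι f w)
include hinj heval hμ hR hR1 hnorm he hMz

theorem pow_apply_eq_smul_monomial_add (m : ℕ) :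
    (Mz ^ m) (e 0) = μ 0 • monomial μ ν e m + ν 0 • monomial μ ν e (m + 1) := by
  refine hinj _ _ fun w hw => ?_
  simp only [apply_pow_apply_eq_pow_mul hMz m _ hw, he 0 w hw, map_add, map_smul, Pi.add_apply,
    Pi.smul_apply, smul_eq_mul, apply_monomial heval hμ hR hR1 hnorm he _ hw]
  ring

theorem isBoundedUnder_norm_pow_apply {δ : ℝ} (hδ : 0 < δ) (hμδ : ∀ᶠ n in atTop, δ ≤ ‖μ n‖) :
    IsBoundedUnder (· ≤ ·) atTop fun m => ‖(Mz ^ m) (e 0)‖ := by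
  refine isBoundedUnder_of_eventually_le (a := (‖μ 0‖ + ‖ν 0‖) * δ⁻¹ * (1 - R)⁻¹) ?_
  filter_upwards [hμδ, (tendsto_add_atTop_nat 1).eventually hμδ] with m hm hm1
  have hp (n : ℕ) (hn : δ ≤ ‖μ n‖) : ‖monomial μ ν e n‖ ≤ δ⁻¹ * (1 - R)⁻¹ :=
    (norm_monomial_le hR hR1 hnorm n).trans (by gcongr)
  rw [pow_apply_eq_smul_monomial_add hinj heval hμ hR hR1 hnorm he hMz]
  calc ‖μ 0 • monomial μ ν e m + ν 0 • monomial μ ν e (m + 1)‖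
      ≤ ‖μ 0‖ * ‖monomial μ ν e m‖ + ‖ν 0‖ * ‖monomial μ ν e (m + 1)‖ :=
        (norm_add_le _ _).trans_eq (by rw [norm_smul, norm_smul])
    _ ≤ ‖μ 0‖ * (δ⁻¹ * (1 - R)⁻¹) + ‖ν 0‖ * (δ⁻¹ * (1 - R)⁻¹) := by
        gcongr
        exacts [hp m hm, hp (m + 1) hm1]
    _ = (‖μ 0‖ + ‖ν 0‖) * δ⁻¹ * (1 - R)⁻¹ := by ring

end Multiplication

theorem stmt13_general {H : Type*}
    [NormedAddCommGroup H] [InnerProductSpace ℂ H] [CompleteSpace H]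
    (ι : H →ₗ[ℂ] (ℂ → ℂ))
    (hinj : ∀ f g : H, Set.EqOn (ι f) (ι g) (ball (0 : ℂ) 1) → f = g)
    (heval : ∀ w ∈ ball (0 : ℂ) 1, Continuous fun f : H => ι f w)
    (μ ν : ℕ → ℂ) (hμ : ∀ n, μ n ≠ 0)
    (R : ℝ)
    (hR : ∀ n, ‖ν n / μ (n + 1)‖ ≤ R)
    (hR1 : R < 1)
    (e : ℕ → H)
    (he : ∀ n, ∀ w ∈ ball (0 : ℂ) 1, ι (e n) w = μ n * w ^ n + ν n * w ^ (n + 1))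
    (hON : Orthonormal ℂ e)
    (Mz : H →L[ℂ] H)
    (hMz : ∀ f : H, ∀ w ∈ ball (0 : ℂ) 1, ι (Mz f) w = w * ι f w)
    (hhyp : ∃ g : H, Dense (Set.range fun m : ℕ => ((adjoint Mz) ^ m) g)) :
    liminf (fun n : ℕ => ((‖μ n‖ : ℝ) : EReal)) atTop = 0 := by
  by_contra hne
  obtain ⟨δ, hδ, hμδ⟩ :=
    exists_pos_eventually_le_of_liminf_ne_zero (fun n => norm_nonneg (μ n)) hne
  obtain ⟨g, hg⟩ := hhyp
  exact not_denseRange_adjoint_pow_orbit (hON.ne_zero 0)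
    (isBoundedUnder_norm_pow_apply hinj heval hμ hR hR1 hON.1 he hMz hδ hμδ) g hg

/-- Tridiagonal setting with `M_z` bounded on `H`: if `M_z*` is hypercyclic on `H` then
`liminf_n |μ_n| = 0`. -/
theorem stmt13 {H : Type*}
    [NormedAddCommGroup H] [InnerProductSpace ℂ H] [CompleteSpace H]
    [TopologicalSpace.SeparableSpace H]
    (ι : H →ₗ[ℂ] (ℂ → ℂ))
    (hinj : ∀ f g : H, Set.EqOn (ι f) (ι g) (ball (0 : ℂ) 1) → f = g)
    (hanal : ∀ f : H, DifferentiableOn ℂ (ι f) (ball (0 : ℂ) 1))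
    (heval : ∀ w ∈ ball (0 : ℂ) 1, Continuous fun f : H => ι f w)
    (μ ν : ℕ → ℂ) (hμ : ∀ n, μ n ≠ 0) (hν : ∀ n, ν n ≠ 0)
    (r R : ℝ)
    (hr : ∀ n, ‖μ n / μ (n + 1)‖ ≤ r)
    (hR : ∀ n, ‖ν n / μ (n + 1)‖ ≤ R)
    (hR1 : R < 1)
    (e : ℕ → H)
    (he : ∀ n, ∀ w ∈ ball (0 : ℂ) 1, ι (e n) w = μ n * w ^ n + ν n * w ^ (n + 1))
    (hON : Orthonormal ℂ e)
    (htotal : Dense ((Submodule.span ℂ (Set.range e) : Submodule ℂ H) : Set H))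
    (Mz : H →L[ℂ] H)
    (hMz : ∀ f : H, ∀ w ∈ ball (0 : ℂ) 1, ι (Mz f) w = w * ι f w)
    (hhyp : ∃ g : H, Dense (Set.range fun m : ℕ => ((adjoint Mz) ^ m) g)) :
    liminf (fun n : ℕ => ((‖μ n‖ : ℝ) : EReal)) atTop = 0 :=
  stmt13_general ι hinj heval μ ν hμ R hR hR1 e he hON Mz hMz hhyp
end

section
/- Let E be a complex Hilbert space, d ∈ ℕ, and A_0, A_1, …, A_d bounded linear operators on E with A_0 injective. Define P(z) = A_0 + A_1 z + ⋯ + A_d z^d for z ∈ 𝔻. If f : 𝔻 → E is analytic and P(z)(f(z)) = 0 for every z ∈ 𝔻, then f(z) = 0 for every z ∈ 𝔻. -/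
open Metric

/-- Let `E` be a complex Hilbert space and `A_0, …, A_d` bounded operators on `E` with
`A_0` injective, and let `P(z) = A_0 + A_1 z + ⋯ + A_d z^d`. If `f : 𝔻 → E` is analytic
and `P(z)(f(z)) = 0` for all `z` in the unit disc, then `f` vanishes identically on the
disc. -/
theorem stmt16 {E : Type*}
    [NormedAddCommGroup E] [InnerProductSpace ℂ E] [CompleteSpace E]
    (d : ℕ) (A : ℕ → (E →L[ℂ] E)) (hA0 : Function.Injective (A 0))
    (f : ℂ → E) (hf : DifferentiableOn ℂ f (ball (0 : ℂ) 1))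
    (hPf : ∀ z ∈ ball (0 : ℂ) 1,
      (∑ j ∈ Finset.range (d + 1), z ^ j • (A j) (f z)) = 0) :
    ∀ z ∈ ball (0 : ℂ) 1, f z = 0 := by
  have h0 : (0 : ℂ) ∈ ball (0 : ℂ) 1 := by simp
  have hfa : AnalyticOnNhd ℂ f (ball (0 : ℂ) 1) :=
    hf.analyticOnNhd isOpen_ball
  have hconn : IsPreconnected (ball (0 : ℂ) 1) := (convex_ball (0 : ℂ) 1).isPreconnected
  by_cases hev : ∀ᶠ z in nhds (0 : ℂ), f z = 0
  · intro z hz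
    exact hfa.eqOn_zero_of_preconnected_of_eventuallyEq_zero hconn h0 hev hz
  · exfalso
    obtain ⟨n, g, hg_an, hg_ne, hg_eq⟩ :=
      (hfa 0 h0).exists_eventuallyEq_pow_smul_nonzero_iff.mpr hev
    set h : ℂ → E := fun z => ∑ j ∈ Finset.range (d + 1), z ^ j • (A j) (g z) with hh
    have hcont : ContinuousAt h 0 := by
      rw [hh]
      exact tendsto_finset_sum _ fun j _ =>
        (continuousAt_id.pow j).smul ((A j).continuous.continuousAt.comp hg_an.continuousAt)
    have hzero : ∀ᶠ z in nhdsWithin (0 : ℂ) {(0 : ℂ)}ᶜ, h z = 0 := by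
      have hb : ∀ᶠ z in nhds (0 : ℂ), z ∈ ball (0 : ℂ) 1 :=
        isOpen_ball.mem_nhds h0
      rw [Filter.eventually_iff_exists_mem]
      obtain ⟨s, hs, hs'⟩ := Filter.eventually_iff_exists_mem.mp (hg_eq.and hb)
      refine ⟨s ∩ {(0:ℂ)}ᶜ, ?_, ?_⟩
      · exact Filter.inter_mem (nhdsWithin_le_nhds hs) self_mem_nhdsWithin
      · rintro z ⟨hzs, hzne⟩
        obtain ⟨hfz, hzb⟩ := hs' z hzs
        have hz0 : z ≠ 0 := hzne
        have key : z ^ n • h z = 0 := by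
          rw [hh]
          have := hPf z hzb
          rw [hfz] at this
          simp only [sub_zero] at this
          rw [Finset.smul_sum]
          rw [← this]
          apply Finset.sum_congr rfl
          intro j _
          rw [map_smul]
          rw [smul_comm]
        have hzn : z ^ n ≠ 0 := pow_ne_zero _ hz0
        exact (smul_eq_zero_iff_right hzn).mp key
    have hne : Filter.NeBot (nhdsWithin (0 : ℂ) {(0 : ℂ)}ᶜ) := by
      exact Filter.NeBot.mono (by infer_instance) le_rfl
    have hh0 : h 0 = 0 := by
      have t1 : Filter.Tendsto h (nhdsWithin (0 : ℂ) {(0 : ℂ)}ᶜ) (nhds (h 0)) :=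
        hcont.continuousWithinAt.tendsto
      have t2 : Filter.Tendsto h (nhdsWithin (0 : ℂ) {(0 : ℂ)}ᶜ) (nhds 0) := by
        rw [Filter.tendsto_congr' (hzero.mono fun z hz => hz)]
        exact tendsto_const_nhds
      exact tendsto_nhds_unique t1 t2
    have hA0g : (A 0) (g 0) = 0 := by
      have : h 0 = (A 0) (g 0) := by
        show (∑ j ∈ Finset.range (d + 1), (0:ℂ) ^ j • (A j) (g 0)) = (A 0) (g 0)
        rw [Finset.sum_eq_single 0 (fun j _ hj => by simp [zero_pow hj]) (by simp)]
        simp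
      rwa [this] at hh0
    exact hg_ne (hA0 (by simpa using hA0g))
end
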